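/- arXiv:0909.3416 — 7 statements merged into one kernel-verified Lean document; each statement's English description precedes it below -/
import Mathlib

section
/- Let (x_n)_{n∈ℕ} be a sequence of complex numbers such that for every p ∈ ℕ the series ∑_{n=p}^∞ x_n/(n−p)! converges; denote its sum by y_p. Fix n ∈ ℕ and, for each integer k ≥ n, set R^n_k := ∑_{n'=k+1}^∞ ∑_{p=n}^k (−1)^{p+n} x_{n'}/((p−n)!·(n'−p)!) (this series converges). Then the series ∑_{p=n}^∞ (−1)^{p−n} y_p/(p−n)! converges with sum x_n if and only if lim_{k→∞} R^n_k = 0. -/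
/-!
Truncate the inner series of `∑_{j ≤ K} (-1)^j y_{n+j} / j!` so that all indices `j + i` stay
below a common bound `N`, and regroup the resulting finite double sum by `m = j + i`. The
coefficient of `x_{n+m}` is `∑_{j ≤ min(m, K)} (-1)^j / (j! (m-j)!)`: for `m ≤ K` this is the
alternating binomial sum `(1 - 1)^m / m!`, so only `x_n` survives, while the terms with `m > K`
are exactly the partial sums of the series defining `R_{n+K}`. Letting `N → ∞` gives
`∑_{j ≤ K} (-1)^j y_{n+j} / j! = x_n + R_{n+K}`, from which the equivalence is immediate.
-/

open Filter

/-- Convergence of the series `∑_{j=0}^∞ f j` (in the sense of partial sums) to `a`. -/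
def SeriesConvTo (f : ℕ → ℂ) (a : ℂ) : Prop :=
  Tendsto (fun N => ∑ j ∈ Finset.range N, f j) atTop (nhds a)

open Finset Nat

section Combinatorics

variable {𝕜 : Type*} [Field 𝕜] [CharZero 𝕜]

theorem sum_range_neg_one_pow_div_factorial_mul_factorial (m : ℕ) :
    ∑ j ∈ range (m + 1), (-1 : 𝕜) ^ j / (j ! * (m - j)! : 𝕜) = if m = 0 then 1 else 0 := by
  have hchoose : ∀ j ∈ range (m + 1),
      (-1 : 𝕜) ^ j / (j ! * (m - j)! : 𝕜) = ((-1) ^ j * m.choose j : ℤ) / (m ! : 𝕜) := by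
    intro j hj
    push_cast
    rw [Nat.cast_choose 𝕜 (Nat.lt_succ_iff.mp (mem_range.mp hj))]
    have : (m ! : 𝕜) ≠ 0 := Nat.cast_ne_zero.mpr m.factorial_ne_zero
    field_simp
  rw [sum_congr rfl hchoose, ← sum_div, ← Int.cast_sum, Int.alternating_sum_range_choose]
  split_ifs with hm <;> simp [hm]

theorem sum_neg_one_pow_mul_partial_sum_div_factorial (a : ℕ → 𝕜) (K M : ℕ) :
    ∑ j ∈ range (K + 1), (-1) ^ j * (∑ i ∈ range (K + 1 + M - j), a (j + i) / i !) / j !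
      = a 0 + ∑ i ∈ range M, ∑ j ∈ range (K + 1),
          (-1) ^ j * a (K + 1 + i) / (j ! * (K + 1 + i - j)! : 𝕜) := by
  set N := K + 1 + M
  have hdiag : ∑ j ∈ range (K + 1), (-1) ^ j * (∑ i ∈ range (N - j), a (j + i) / i !) / j !
      = ∑ m ∈ range N, a m * ∑ j ∈ range (min (m + 1) (K + 1)),
          (-1 : 𝕜) ^ j / (j ! * (m - j)! : 𝕜) := by
    calc _ = ∑ j ∈ range (K + 1), ∑ m ∈ Ico j N, (-1 : 𝕜) ^ j * a m / (j ! * (m - j)! : 𝕜) := by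
          refine sum_congr rfl fun j _ => ?_
          rw [sum_Ico_eq_sum_range, mul_sum, sum_div]
          refine sum_congr rfl fun i _ => ?_
          rw [Nat.add_sub_cancel_left]
          field_simp
      _ = ∑ m ∈ range N, ∑ j ∈ range (min (m + 1) (K + 1)),
            (-1 : 𝕜) ^ j * a m / (j ! * (m - j)! : 𝕜) := by
          refine sum_comm' fun j m => ?_
          simp only [mem_range, mem_Ico]
          omega
      _ = _ := by
          refine sum_congr rfl fun m _ => ?_
          rw [mul_sum]
          refine sum_congr rfl fun j _ => ?_
          ring
  rw [hdiag, sum_range_add]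
  congr 1
  · have hlow : ∀ m ∈ range (K + 1), min (m + 1) (K + 1) = m + 1 := fun m hm =>
      min_eq_left (mem_range.mp hm)
    rw [sum_congr rfl fun m hm => by
      rw [hlow m hm, sum_range_neg_one_pow_div_factorial_mul_factorial]]
    simp
  · refine sum_congr rfl fun i _ => ?_
    rw [min_eq_right (by omega), mul_sum]
    refine sum_congr rfl fun j _ => ?_
    ring

end Combinatorics

theorem sum_range_eq_sum_Icc_neg_one_pow (x : ℕ → ℂ) (n K i : ℕ) :
    ∑ j ∈ range (K + 1), (-1) ^ j * x (n + (K + 1 + i)) / (j ! * (K + 1 + i - j)! : ℂ)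
      = ∑ p ∈ Icc n (n + K),
          (-1) ^ (p + n) * x (n + K + 1 + i) / ((p - n)! * (n + K + 1 + i - p)! : ℂ) := by
  rw [← Ico_add_one_right_eq_Icc, sum_Ico_eq_sum_range, show n + K + 1 - n = K + 1 by omega]
  refine sum_congr rfl fun j _ => ?_
  rw [show n + j + n = j + 2 * n by ring, pow_add, pow_mul, neg_one_sq, one_pow, mul_one,
    Nat.add_sub_cancel_left, show n + K + 1 + i - (n + j) = K + 1 + i - j by omega, ← add_assoc,
    ← add_assoc]

/-- Lemma 2 (a): with `y_p = ∑_{n=p}^∞ x_n/(n−p)!` and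
`R^n_k = ∑_{n'=k+1}^∞ ∑_{p=n}^k (−1)^{p+n} x_{n'}/((p−n)!(n'−p)!)`,
the series `∑_{p=n}^∞ (−1)^{p−n} y_p/(p−n)!` converges to `x_n` iff `R^n_k → 0`. -/
theorem stmt_0 (x y : ℕ → ℂ)
    (hy : ∀ p : ℕ, SeriesConvTo (fun j => x (p + j) / (j.factorial : ℂ)) (y p))
    (n : ℕ) (R : ℕ → ℂ)
    (hR : ∀ k, n ≤ k →
      SeriesConvTo
        (fun j => ∑ p ∈ Finset.Icc n k,
          (-1 : ℂ) ^ (p + n) * x (k + 1 + j) /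
            (((p - n).factorial : ℂ) * (((k + 1 + j) - p).factorial : ℂ)))
        (R k)) :
    SeriesConvTo (fun j => (-1 : ℂ) ^ j * y (n + j) / (j.factorial : ℂ)) (x n) ↔
      Tendsto R atTop (nhds 0) := by
  have hpartial : ∀ K, ∑ j ∈ range (K + 1), (-1) ^ j * y (n + j) / j ! = x n + R (n + K) := by
    intro K
    refine tendsto_nhds_unique (l := atTop) (f := fun M => ∑ j ∈ range (K + 1),
      (-1) ^ j * (∑ i ∈ range (K + 1 + M - j), x (n + (j + i)) / i !) / j !) ?_ ?_
    · refine tendsto_finsetSum _ fun j _ => (Tendsto.const_mul _ ?_).div_const _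
      have hshift : Tendsto (fun M => K + 1 + M - j) atTop atTop :=
        (tendsto_sub_atTop_nat j).comp (tendsto_atTop_mono (fun _ => le_add_self) tendsto_id)
      simpa only [SeriesConvTo, Function.comp_def, add_assoc] using (hy (n + j)).comp hshift
    · simp_rw [sum_neg_one_pow_mul_partial_sum_div_factorial (fun m => x (n + m)),
        sum_range_eq_sum_Icc_neg_one_pow]
      exact (hR (n + K) le_self_add).const_add (x n)
  rw [SeriesConvTo, ← tendsto_add_atTop_iff_nat 1, ← tendsto_add_atTop_iff_nat n (f := R),
    funext hpartial, ← tendsto_sub_nhds_zero_iff]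
  simp_rw [add_sub_cancel_left, add_comm]
end

section
/- Let (x_n)_{n∈ℕ} be a sequence of complex numbers such that for every p ∈ ℕ the series ∑_{n=p}^∞ x_n/(n−p)! converges, and suppose lim_{n→∞} |x_n| = 0. For n ∈ ℕ and integers k ≥ n set R^n_k := ∑_{n'=k+1}^∞ ∑_{p=n}^k (−1)^{p+n} x_{n'}/((p−n)!·(n'−p)!). Then for every n ∈ ℕ, lim_{k→∞} R^n_k = 0. -/
/-!
Since `x` tends to zero it is bounded, say by `C`. For `m > k ≥ n` the inner sum
`∑_{p=n}^k 1/((p-n)! (m-p)!)` is part of the binomial expansion of `2^(m-n)/(m-n)!`, so the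
`j`-th term of the series defining `R^n_k` is at most `C · 2^(m-n)/(m-n)!` with `m = k+1+j`.
Hence `‖R^n_k‖` is bounded by `C` times a tail of the convergent series `∑ 2^t/t!`,
which tends to zero as `k → ∞`.
-/

open Filter

open Finset
open scoped Nat

lemma sum_range_inv_factorial_mul_factorial_sub (M : ℕ) :
    ∑ i ∈ range (M + 1), ((i ! : ℝ) * (M - i)!)⁻¹ = 2 ^ M / M ! := by
  have hterm : ∀ i ∈ range (M + 1), ((i ! : ℝ) * (M - i)!)⁻¹ = M.choose i / M ! := by
    intro i hi
    rw [Nat.cast_choose ℝ (Nat.lt_succ_iff.mp (mem_range.mp hi))]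
    field_simp
  rw [sum_congr rfl hterm, ← sum_div]
  exact_mod_cast congrArg (fun s : ℕ => (s : ℝ) / M !) (Nat.sum_range_choose M)

lemma sum_Icc_inv_factorial_mul_factorial_le {n k m : ℕ} (hkm : k ≤ m) :
    ∑ p ∈ Icc n k, (((p - n)! : ℝ) * (m - p)!)⁻¹ ≤ 2 ^ (m - n) / (m - n)! := by
  rw [← Ico_add_one_right_eq_Icc, sum_Ico_eq_sum_range,
    ← sum_range_inv_factorial_mul_factorial_sub]
  have hsub : ∀ i, m - (n + i) = m - n - i := fun i => by omega
  simp only [Nat.add_sub_cancel_left, hsub]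
  exact sum_le_sum_of_subset_of_nonneg (range_subset_range.2 (by omega))
    fun _ _ _ => by positivity

lemma norm_sum_Icc_alternating_le {n k m : ℕ} (hkm : k ≤ m) (z : ℂ) :
    ‖∑ p ∈ Icc n k, (-1 : ℂ) ^ (p + n) * z / (((p - n)! : ℂ) * ((m - p)! : ℂ))‖
      ≤ ‖z‖ * (2 ^ (m - n) / (m - n)!) := by
  have hterm : ∀ p, ‖(-1 : ℂ) ^ (p + n) * z / (((p - n)! : ℂ) * ((m - p)! : ℂ))‖
      = ‖z‖ * (((p - n)! : ℝ) * (m - p)!)⁻¹ := fun p => by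
    simp [div_eq_mul_inv]
  calc _ ≤ ∑ p ∈ Icc n k, ‖(-1 : ℂ) ^ (p + n) * z / (((p - n)! : ℂ) * ((m - p)! : ℂ))‖ :=
        norm_sum_le _ _
    _ = ‖z‖ * ∑ p ∈ Icc n k, (((p - n)! : ℝ) * (m - p)!)⁻¹ := by
        simp only [hterm, mul_sum]
    _ ≤ ‖z‖ * (2 ^ (m - n) / (m - n)!) := by
        gcongr
        exact sum_Icc_inv_factorial_mul_factorial_le hkm

lemma norm_le_tsum_of_seriesConvTo {f : ℕ → ℂ} {a : ℂ} {b : ℕ → ℝ} (h : SeriesConvTo f a)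
    (hb : Summable b) (hfb : ∀ j, ‖f j‖ ≤ b j) : ‖a‖ ≤ ∑' j, b j := by
  refine le_of_tendsto h.norm (Eventually.of_forall fun N => ?_)
  calc ‖∑ j ∈ range N, f j‖ ≤ ∑ j ∈ range N, b j :=
        (norm_sum_le _ _).trans (sum_le_sum fun j _ => hfb j)
    _ ≤ ∑' j, b j := hb.sum_le_tsum _ fun j _ => (norm_nonneg _).trans (hfb j)

theorem stmt_1_general (x : ℕ → ℂ)
    (hx : Tendsto (fun n => ‖x n‖) atTop (nhds 0))
    (R : ℕ → ℕ → ℂ)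
    (hR : ∀ n k, n ≤ k →
      SeriesConvTo
        (fun j => ∑ p ∈ Finset.Icc n k,
          (-1 : ℂ) ^ (p + n) * x (k + 1 + j) /
            (((p - n).factorial : ℂ) * (((k + 1 + j) - p).factorial : ℂ)))
        (R n k)) :
    ∀ n : ℕ, Tendsto (fun k => R n k) atTop (nhds 0) := by
  intro n
  obtain ⟨C, hC⟩ := hx.bddAbove_range
  have hxC : ∀ m, ‖x m‖ ≤ C := fun m => hC ⟨m, rfl⟩
  set g : ℕ → ℝ := fun t => (2 ^ t / t !)
  have hg : Summable g := Real.summable_pow_div_factorial 2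
  have hbound : ∀ k ≥ n, ‖R n k‖ ≤ C * ∑' j, g (j + (k + 1 - n)) := by
    intro k hk
    rw [← tsum_mul_left]
    refine norm_le_tsum_of_seriesConvTo (hR n k hk)
      (((summable_nat_add_iff _).2 hg).mul_left C) fun j => ?_
    have hshift : k + 1 + j - n = j + (k + 1 - n) := by omega
    calc _ ≤ ‖x (k + 1 + j)‖ * g (k + 1 + j - n) := norm_sum_Icc_alternating_le (by omega) _
      _ ≤ C * g (j + (k + 1 - n)) := by
        rw [hshift]
        gcongr
        exact hxC _
  have htail : Tendsto (fun k => C * ∑' j, g (j + (k + 1 - n))) atTop (nhds 0) := by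
    have hshift : Tendsto (fun k : ℕ => k + 1 - n) atTop atTop :=
      tendsto_atTop_atTop.mpr fun b => ⟨b + n, fun a ha => by omega⟩
    simpa using ((tendsto_sum_nat_add g).comp hshift).const_mul C
  rw [tendsto_zero_iff_norm_tendsto_zero]
  exact squeeze_zero_norm' ((eventually_ge_atTop n).mono fun k hk => by simpa using hbound k hk)
    htail

/-- Lemma 2 (b): if the series `∑_{n=p}^∞ x_n/(n−p)!` converges for every `p` and
`|x_n| → 0`, then `R^n_k → 0` as `k → ∞`, for every `n`. -/
theorem stmt_1 (x y : ℕ → ℂ)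
    (hy : ∀ p : ℕ, SeriesConvTo (fun j => x (p + j) / (j.factorial : ℂ)) (y p))
    (hx : Tendsto (fun n => ‖x n‖) atTop (nhds 0))
    (R : ℕ → ℕ → ℂ)
    (hR : ∀ n k, n ≤ k →
      SeriesConvTo
        (fun j => ∑ p ∈ Finset.Icc n k,
          (-1 : ℂ) ^ (p + n) * x (k + 1 + j) /
            (((p - n).factorial : ℂ) * (((k + 1 + j) - p).factorial : ℂ)))
        (R n k)) :
    ∀ n : ℕ, Tendsto (fun k => R n k) atTop (nhds 0) :=
  stmt_1_general x hx R hR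
end

section
/- For every λ ∈ ℂ with |λ| < 1 and every t ∈ ℝ, the series ∑_{k=0}^∞ ((λ−1)^k·k!/(2^k·(2k)!))·H_{2k}(t) converges absolutely, i.e. ∑_{k=0}^∞ (|λ−1|^k·k!/(2^k·(2k)!))·|H_{2k}(t)| < ∞. -/
/-!
Bound `|H_n(t)|` by `G_n(|t|)`, where `G` obeys the Hermite recursion with a plus sign. Normalising
`E_k = k!/(2k)! · G_{2k}(u)` and `O_k = k!/(2k+1)! · G_{2k+1}(u)` turns that recursion into
`E_{k+1} = E_k + u O_k` and `(2k+3) O_{k+1} = 2u E_{k+1} + (2k+2) O_k`. For large `k` the odd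
step barely moves `O`, so for any `l > 1` the bounds `E_k ≤ C l^k` and `O_k ≤ C μ l^k`, with
`μ = (l - 1)/(u + 1)`, propagate by induction. The `k`-th term of the series is at most
`(|λ - 1|/2)^k E_k`, and `|λ - 1| < 2`.
-/

/-- Physicists' Hermite polynomials: `H 0 = 1`, `H 1 x = 2x`,
`H (n+2) x = 2x·H (n+1) x − 2(n+1)·H n x`. -/
noncomputable def physHermite : ℕ → ℝ → ℝ
  | 0, _ => 1
  | 1, x => 2 * x
  | n + 2, x => 2 * x * physHermite (n + 1) x - 2 * (n + 1) * physHermite n x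

theorem le_geometric_of_coupled_recursion {E O : ℕ → ℝ} {u l μ C : ℝ} {K : ℕ}
    (hE : ∀ k, E (k + 1) = E k + u * O k)
    (hO : ∀ k, (2 * k + 3) * O (k + 1) = 2 * u * E (k + 1) + (2 * k + 2) * O k)
    (hu : 0 ≤ u) (hμ : 0 ≤ μ) (hC : 0 ≤ C) (hl : 1 + u * μ ≤ l)
    (hK : ∀ k ≥ K, 2 * u * l ≤ μ * ((l - 1) * (2 * k + 3) + 1))
    (hEK : E K ≤ C * l ^ K) (hOK : O K ≤ C * μ * l ^ K) :
    ∀ k ≥ K, E k ≤ C * l ^ k ∧ O k ≤ C * μ * l ^ k := by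
  intro k hk
  induction k, hk using Nat.le_induction with
  | base => exact ⟨hEK, hOK⟩
  | succ k hk ih =>
    obtain ⟨ihE, ihO⟩ := ih
    have hl : 0 ≤ l := by nlinarith [mul_nonneg hu hμ]
    have hE' : E (k + 1) ≤ C * l ^ (k + 1) := by
      calc E (k + 1) = E k + u * O k := hE k
        _ ≤ C * l ^ k + u * (C * μ * l ^ k) := by gcongr
        _ = C * l ^ k * (1 + u * μ) := by ring
        _ ≤ C * l ^ k * l := by gcongr
        _ = C * l ^ (k + 1) := by ring
    refine ⟨hE', le_of_mul_le_mul_left ?_ (by positivity : (0 : ℝ) < 2 * k + 3)⟩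
    calc (2 * k + 3) * O (k + 1) = 2 * u * E (k + 1) + (2 * k + 2) * O k := hO k
      _ ≤ 2 * u * (C * l ^ (k + 1)) + (2 * k + 2) * (C * μ * l ^ k) := by gcongr
      _ = C * l ^ k * (2 * u * l) + C * l ^ k * ((2 * k + 2) * μ) := by ring
      _ ≤ C * l ^ k * (μ * ((l - 1) * (2 * k + 3) + 1)) + C * l ^ k * ((2 * k + 2) * μ) := by
        gcongr C * l ^ k * ?_ + _
        exact hK k hk
      _ = (2 * k + 3) * (C * μ * l ^ (k + 1)) := by ring

/-- `physHermiteMajorant n u = i⁻ⁿ H_n(iu)`, a polynomial with nonnegative coefficients. -/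
noncomputable def physHermiteMajorant : ℕ → ℝ → ℝ
  | 0, _ => 1
  | 1, x => 2 * x
  | n + 2, x => 2 * x * physHermiteMajorant (n + 1) x + 2 * (n + 1) * physHermiteMajorant n x

theorem physHermiteMajorant_nonneg {u : ℝ} (hu : 0 ≤ u) : ∀ n, 0 ≤ physHermiteMajorant n u
  | 0 => zero_le_one
  | 1 => by simp only [physHermiteMajorant]; positivity
  | n + 2 => by
    have := physHermiteMajorant_nonneg hu n
    have := physHermiteMajorant_nonneg hu (n + 1)
    simp only [physHermiteMajorant]
    positivity

theorem abs_physHermite_le_physHermiteMajorant (t : ℝ) :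
    ∀ n, |physHermite n t| ≤ physHermiteMajorant n |t|
  | 0 => by simp [physHermite, physHermiteMajorant]
  | 1 => by simp [physHermite, physHermiteMajorant, abs_mul]
  | n + 2 => by
    have h₀ := abs_physHermite_le_physHermiteMajorant t n
    have h₁ := abs_physHermite_le_physHermiteMajorant t (n + 1)
    calc |physHermite (n + 2) t|
        ≤ |2 * t * physHermite (n + 1) t| + |2 * (n + 1) * physHermite n t| := abs_sub _ _
      _ = 2 * |t| * |physHermite (n + 1) t| + 2 * (n + 1) * |physHermite n t| := by
        simp only [abs_mul, abs_two]
        rw [abs_of_nonneg (by positivity : (0 : ℝ) ≤ n + 1)]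
      _ ≤ physHermiteMajorant (n + 2) |t| := by
        simp only [physHermiteMajorant]
        gcongr

namespace physHermiteMajorant

/-- Normalised so as to be identically `1` at `u = 0`, where `G_{2k}(0) = (2k)!/k!`. -/
noncomputable def evenNormalized (u : ℝ) (k : ℕ) : ℝ :=
  k.factorial / (2 * k).factorial * physHermiteMajorant (2 * k) u

noncomputable def oddNormalized (u : ℝ) (k : ℕ) : ℝ :=
  k.factorial / (2 * k + 1).factorial * physHermiteMajorant (2 * k + 1) u

theorem evenNormalized_nonneg {u : ℝ} (hu : 0 ≤ u) (k : ℕ) : 0 ≤ evenNormalized u k := by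
  have := physHermiteMajorant_nonneg hu (2 * k)
  unfold evenNormalized
  positivity

theorem evenNormalized_succ (u : ℝ) (k : ℕ) :
    evenNormalized u (k + 1) = evenNormalized u k + u * oddNormalized u k := by
  simp only [evenNormalized, oddNormalized, show 2 * (k + 1) = 2 * k + 2 by ring,
    physHermiteMajorant, Nat.factorial_succ]
  push_cast
  field_simp
  ring

theorem oddNormalized_succ (u : ℝ) (k : ℕ) :
    (2 * k + 3) * oddNormalized u (k + 1)
      = 2 * u * evenNormalized u (k + 1) + (2 * k + 2) * oddNormalized u k := by
  simp only [evenNormalized, oddNormalized, show 2 * (k + 1) = 2 * k + 2 by ring,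
    physHermiteMajorant, Nat.factorial_succ]
  push_cast
  field_simp
  ring

theorem exists_evenNormalized_le_geometric {u l : ℝ} (hu : 0 ≤ u) (hl : 1 < l) :
    ∃ C K, ∀ k ≥ K, evenNormalized u k ≤ C * l ^ k := by
  set μ := (l - 1) / (u + 1) with hμ_def
  have hμ : 0 < μ := by positivity
  have hl' : 1 + u * μ ≤ l := by
    have : u * μ ≤ l - 1 := by
      rw [hμ_def, mul_div_assoc', div_le_iff₀ (by positivity)]
      nlinarith
    linarith
  obtain ⟨K, hK⟩ := exists_nat_ge (u * l / (μ * (l - 1)))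
  rw [div_le_iff₀ (by nlinarith)] at hK
  have hKk : ∀ k ≥ K, 2 * u * l ≤ μ * ((l - 1) * (2 * k + 3) + 1) := by
    intro k hk
    have hμl : 0 ≤ μ * (l - 1) := by nlinarith
    have : (K : ℝ) * (μ * (l - 1)) ≤ k * (μ * (l - 1)) :=
      mul_le_mul_of_nonneg_right (by exact_mod_cast hk) hμl
    nlinarith
  have hlK : 0 < l ^ K := by positivity
  set C := max 0 (max (evenNormalized u K / l ^ K) (oddNormalized u K / (μ * l ^ K)))
  have hEK : evenNormalized u K ≤ C * l ^ K := by
    rw [← div_le_iff₀ hlK]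
    exact (le_max_left _ _).trans (le_max_right _ _)
  have hOK : oddNormalized u K ≤ C * μ * l ^ K := by
    rw [mul_assoc, ← div_le_iff₀ (by positivity)]
    exact (le_max_right _ _).trans (le_max_right _ _)
  exact ⟨C, K, fun k hk => (le_geometric_of_coupled_recursion (evenNormalized_succ u)
    (oddNormalized_succ u) hu hμ.le (le_max_left _ _) hl' hKk hEK hOK k hk).1⟩

theorem summable_geometric_mul_evenNormalized {u ρ : ℝ} (hu : 0 ≤ u) (hρ₀ : 0 ≤ ρ)
    (hρ₁ : ρ < 1) : Summable fun k => ρ ^ k * evenNormalized u k := by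
  obtain ⟨C, K, hCK⟩ := exists_evenNormalized_le_geometric hu
    ((one_lt_div (by linarith)).2 (by linarith) : 1 < 2 / (1 + ρ))
  have hq : ρ * (2 / (1 + ρ)) < 1 := by
    rw [mul_div_assoc', div_lt_one (by linarith)]
    linarith
  refine .of_norm_bounded_eventually_nat
    ((summable_geometric_of_lt_one (by positivity) hq).mul_left C) ?_
  filter_upwards [Filter.eventually_ge_atTop K] with k hk
  rw [Real.norm_of_nonneg (by have := evenNormalized_nonneg hu k; positivity), mul_pow]
  calc ρ ^ k * evenNormalized u k ≤ ρ ^ k * (C * (2 / (1 + ρ)) ^ k) := by gcongr; exact hCK k hk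
    _ = C * (ρ ^ k * (2 / (1 + ρ)) ^ k) := by ring

end physHermiteMajorant

/-- Absolute convergence of the series defining the generalized Markov kernel:
for `|λ| < 1` and `t ∈ ℝ`, `∑_{k} (|λ−1|^k k!/(2^k (2k)!)) |H_{2k}(t)| < ∞`. -/
theorem stmt_7 (lam : ℂ) (hlam : ‖lam‖ < 1) (t : ℝ) :
    Summable fun k : ℕ =>
      ‖lam - 1‖ ^ k * (k.factorial : ℝ) / (2 ^ k * ((2 * k).factorial : ℝ)) *
        |physHermite (2 * k) t| := by
  have hr : ‖lam - 1‖ < 2 := by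
    calc ‖lam - 1‖ ≤ ‖lam‖ + ‖(1 : ℂ)‖ := norm_sub_le _ _
      _ < 2 := by rw [norm_one]; linarith
  refine (physHermiteMajorant.summable_geometric_mul_evenNormalized (abs_nonneg t)
    (by positivity : 0 ≤ ‖lam - 1‖ / 2) (by linarith)).of_nonneg_of_le (fun k => by positivity)
    (fun k => ?_)
  calc ‖lam - 1‖ ^ k * (k.factorial : ℝ) / (2 ^ k * ((2 * k).factorial : ℝ)) *
        |physHermite (2 * k) t|
      ≤ ‖lam - 1‖ ^ k * (k.factorial : ℝ) / (2 ^ k * ((2 * k).factorial : ℝ)) *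
        physHermiteMajorant (2 * k) |t| := by
        gcongr; exact abs_physHermite_le_physHermiteMajorant t (2 * k)
    _ = (‖lam - 1‖ / 2) ^ k * physHermiteMajorant.evenNormalized |t| k := by
        rw [physHermiteMajorant.evenNormalized, div_pow]; ring
end

section
/- Let λ ∈ (−1,0), k, l ∈ ℕ, and let (c_n)_{n∈ℕ} be a sequence of complex numbers with |c_n| ≤ 1 for all n. Define W_k(r) := ∑_{n=0}^∞ c_n·K^λ_{n,n+k}(r) for r ∈ [0,∞). Then the function r ↦ W_k(r)·K^{1/λ}_{l,l+k}(r)·r is integrable on [0,∞), each function r ↦ K^λ_{n,n+k}(r)·K^{1/λ}_{l,l+k}(r)·r is integrable on [0,∞), and ∫_0^∞ W_k(r)·K^{1/λ}_{l,l+k}(r)·r dr = ∑_{n=0}^∞ c_n·∫_0^∞ K^λ_{n,n+k}(r)·K^{1/λ}_{l,l+k}(r)·r dr, the series on the right converging. -/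
open MeasureTheory Filter

noncomputable def Kfun (lam : ℂ) (n k : ℕ) (r : ℝ) : ℂ :=
  ((Real.sqrt ((n.factorial : ℝ) / ((n + k).factorial : ℝ)) : ℝ) : ℂ) * (1 - lam) ^ (k + 1) *
    Complex.exp (-(1 - lam) * (r : ℂ) ^ 2) * (r : ℂ) ^ k *
    ∑ u ∈ Finset.range (n + 1),
      (lam ^ (n - u) / (u.factorial : ℂ)) * (((n + k).choose (n - u) : ℕ) : ℂ) *
        (1 - lam) ^ (2 * u) * (r : ℂ) ^ (2 * u)

open Finset Nat Real

/-!
For real `λ ≠ 0` the kernel is real: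
`K^λ_{n,n+k}(r) = √(n!/(n+k)!) (1-λ)^{k+1} e^{-(1-λ)r²} r^k λ^n L_n^k(c r²)`
with `c = 2 - λ - λ⁻¹`, which is invariant under `λ ↦ λ⁻¹` and equals `(1-λ) + (1-λ⁻¹)`.
Hence, by `|xy| ≤ x² + y²`, `|K^λ_{n,n+k} K^{1/λ}_{l,l+k} r|` is at most
`C |λ|^n e^{-cr²} r^{2k+1} (L_n^k(cr²)² + L_l^k(cr²)²)`. The Laguerre norm
`∫₀^∞ e^{-cr²} r^{2k+1} L_n^k(cr²)² dr = (n+k)! / (n! · 2c^{k+1})`, a Chu–Vandermonde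
computation, grows only polynomially in `n`. So for `λ ∈ (-1, 0)` the `L¹` norms of the terms
of `∑ c_n K^λ_{n,n+k} K^{1/λ}_{l,l+k} r` are summable and the series can be integrated termwise.
-/

theorem integrable_tsum_of_summable_integral_norm {α E ι : Type*} [MeasurableSpace α]
    {μ : Measure α} [NormedAddCommGroup E] [CompleteSpace E] [Countable ι] {F : ι → α → E}
    (hF_int : ∀ i, Integrable (F i) μ) (hF_sum : Summable fun i ↦ ∫ a, ‖F i a‖ ∂μ) :
    Integrable (fun a ↦ ∑' i, F i a) μ := by
  have hf : ∑' i, ‖(hF_int i).toL1 (F i)‖ₑ ≠ ⊤ := by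
    refine tsum_enorm_ne_top_iff_summable_norm.2 ?_
    simpa only [L1.norm_of_fun_eq_integral_norm] using hF_sum
  refine (L1.integrable_coeFn (∑' i, (hF_int i).toL1 (F i))).congr ?_
  filter_upwards [Lp.coeFn_tsum hf, ae_all_iff.2 fun i ↦ (hF_int i).coeFn_toL1] with a h1 h2
  rw [h1]
  exact tsum_congr h2

theorem Ring.choose_neg_natCast_succ (q v : ℕ) :
    Ring.choose (-((q : ℤ) + 1)) v = (-1) ^ v * ((q + v).choose v : ℤ) := by
  rw [Ring.choose_neg, show (q : ℤ) + 1 + v - 1 = ((q + v : ℕ) : ℤ) by push_cast; ring,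
    Ring.choose_natCast, Units.smul_def, Int.coe_negOnePow_natCast, smul_eq_mul]

-- Chu–Vandermonde for `(1 + X) ^ N * (1 + X) ^ (-(q + 1))`.
theorem sum_neg_one_pow_mul_choose_mul_choose (N q m : ℕ) :
    ∑ v ∈ range (m + 1), (-1 : ℤ) ^ v * (N.choose (m - v) : ℤ) * ((q + v).choose v : ℤ) =
      Ring.choose ((N : ℤ) - (q + 1)) m := by
  rw [sub_eq_neg_add, Ring.add_choose_eq m (Commute.all _ _), Nat.sum_antidiagonal_eq_sum_range_succ
    (fun i j => Ring.choose (-((q : ℤ) + 1)) i * Ring.choose (N : ℤ) j)]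
  refine sum_congr rfl fun v _ => ?_
  rw [Ring.choose_neg_natCast_succ, Ring.choose_natCast]
  ring

theorem sum_neg_one_pow_mul_choose_mul_choose_eq_ite (n k u : ℕ) (hu : u ≤ n) :
    ∑ v ∈ range (n + 1),
        (-1 : ℤ) ^ v * ((n + k).choose (n - v) : ℤ) * ((k + u + v).choose v : ℤ) =
      if u = n then (-1) ^ n else 0 := by
  rw [sum_neg_one_pow_mul_choose_mul_choose]
  split_ifs with h
  · subst h
    rw [show ((u + k : ℕ) : ℤ) - ((k + u : ℕ) + 1) = -((0 : ℕ) + 1) by push_cast; ring,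
      Ring.choose_neg_natCast_succ]
    simp
  · rw [show ((n + k : ℕ) : ℤ) - ((k + u : ℕ) + 1) = ((n - u - 1 : ℕ) : ℤ) by omega,
      Ring.choose_natCast, Nat.choose_eq_zero_of_lt (by omega), Nat.cast_zero]

-- This is `∫₀^∞ e^{-x} x^k L_n^k(x)² dx = (n + k)! / n!` expanded termwise; summing over `v`
-- first kills every row except `u = n`.
theorem sum_sum_laguerre_coeff_mul_factorial (n k : ℕ) :
    ∑ u ∈ range (n + 1), ∑ v ∈ range (n + 1),
      (-1 : ℝ) ^ u * (-1) ^ v / (u ! * v !) * ((n + k).choose (n - u) : ℝ) *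
        ((n + k).choose (n - v) : ℝ) * ((k + u + v)! : ℝ) = (n + k).descFactorial k := by
  have inner : ∀ u ∈ range (n + 1), ∑ v ∈ range (n + 1),
      (-1 : ℝ) ^ u * (-1) ^ v / (u ! * v !) * ((n + k).choose (n - u) : ℝ) *
        ((n + k).choose (n - v) : ℝ) * ((k + u + v)! : ℝ) =
      (-1) ^ u / u ! * ((n + k).choose (n - u) : ℝ) * (k + u)! *
        ((if u = n then (-1) ^ n else 0 : ℤ) : ℝ) := by
    intro u hu
    rw [← sum_neg_one_pow_mul_choose_mul_choose_eq_ite n k u (mem_range_succ_iff.1 hu),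
      Int.cast_sum, mul_sum]
    refine sum_congr rfl fun v _ => ?_
    rw [← Nat.add_choose_mul_factorial_mul_factorial (k + u) v]
    push_cast
    field_simp
  rw [sum_congr rfl inner]
  simp only [apply_ite (Int.cast : ℤ → ℝ), Int.cast_zero, mul_ite, mul_zero, sum_ite_eq',
    Finset.mem_range, Nat.lt_succ_self, if_true, Nat.sub_self, Nat.choose_zero_right]
  have hfac : ((k + n)! : ℝ) = n ! * (n + k).descFactorial k := by
    have := Nat.factorial_mul_descFactorial (Nat.le_add_left k n)
    rw [Nat.add_sub_cancel] at this
    rw [add_comm k n]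
    exact_mod_cast this.symm
  rw [hfac]
  push_cast
  field_simp
  rw [← pow_mul, pow_mul', neg_one_sq, one_pow]

theorem integrableOn_pow_mul_exp_neg_mul_sq {c : ℝ} (hc : 0 < c) (m : ℕ) :
    IntegrableOn (fun r : ℝ => r ^ m * exp (-c * r ^ 2)) (Set.Ioi 0) := by
  simpa only [Real.rpow_natCast] using
    integrableOn_rpow_mul_exp_neg_mul_sq hc (s := m)
      (by linarith [(m.cast_nonneg : (0 : ℝ) ≤ m)])

theorem integral_pow_mul_exp_neg_mul_sq {c : ℝ} (hc : 0 < c) (j : ℕ) :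
    ∫ r in Set.Ioi (0 : ℝ), r ^ (2 * j + 1) * exp (-c * r ^ 2) = j ! / (2 * c ^ (j + 1)) := by
  have h := integral_rpow_mul_exp_neg_mul_rpow two_pos
    (by linarith [(j.cast_nonneg : (0 : ℝ) ≤ j)] : (-1 : ℝ) < ((2 * j + 1 : ℕ) : ℝ)) hc
  simp only [Real.rpow_natCast, Real.rpow_two] at h
  rw [h, show -(((2 * j + 1 : ℕ) : ℝ) + 1) / 2 = -((j + 1 : ℕ) : ℝ) by push_cast; ring,
    show (((2 * j + 1 : ℕ) : ℝ) + 1) / 2 = (j : ℝ) + 1 by push_cast; ring,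
    Real.rpow_neg hc.le, Real.rpow_natCast, Real.Gamma_nat_eq_factorial]
  field_simp

noncomputable def laguerre (n k : ℕ) (x : ℝ) : ℝ :=
  ∑ u ∈ range (n + 1), (-1) ^ u / u ! * ((n + k).choose (n - u) : ℝ) * x ^ u

noncomputable def laguerreGaussSq (c : ℝ) (n k : ℕ) (r : ℝ) : ℝ :=
  exp (-c * r ^ 2) * r ^ (2 * k + 1) * laguerre n k (c * r ^ 2) ^ 2

theorem laguerreGaussSq_eq_sum (c : ℝ) (n k : ℕ) (r : ℝ) :
    laguerreGaussSq c n k r = ∑ u ∈ range (n + 1), ∑ v ∈ range (n + 1),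
      ((-1 : ℝ) ^ u * (-1) ^ v / (u ! * v !) * ((n + k).choose (n - u) : ℝ) *
        ((n + k).choose (n - v) : ℝ) * c ^ (u + v)) *
        (r ^ (2 * (k + u + v) + 1) * exp (-c * r ^ 2)) := by
  rw [laguerreGaussSq, pow_two (laguerre n k _), laguerre, sum_mul_sum]
  simp only [mul_sum]
  refine sum_congr rfl fun u _ => sum_congr rfl fun v _ => ?_
  ring

theorem integrableOn_laguerreGaussSq {c : ℝ} (hc : 0 < c) (n k : ℕ) :
    IntegrableOn (laguerreGaussSq c n k) (Set.Ioi 0) := by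
  rw [funext (laguerreGaussSq_eq_sum c n k)]
  exact integrable_finsetSum _ fun u _ => integrable_finsetSum _ fun v _ =>
    (integrableOn_pow_mul_exp_neg_mul_sq hc _).const_mul _

theorem integral_laguerreGaussSq {c : ℝ} (hc : 0 < c) (n k : ℕ) :
    ∫ r in Set.Ioi (0 : ℝ), laguerreGaussSq c n k r =
      (n + k).descFactorial k / (2 * c ^ (k + 1)) := by
  simp only [laguerreGaussSq_eq_sum]
  rw [integral_finsetSum _ fun u _ => integrable_finsetSum _ fun v _ =>
    (integrableOn_pow_mul_exp_neg_mul_sq hc _).const_mul _]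
  rw [← sum_sum_laguerre_coeff_mul_factorial, sum_div]
  refine sum_congr rfl fun u _ => ?_
  rw [integral_finsetSum _ fun v _ => (integrableOn_pow_mul_exp_neg_mul_sq hc _).const_mul _,
    sum_div]
  refine sum_congr rfl fun v _ => ?_
  rw [integral_const_mul, integral_pow_mul_exp_neg_mul_sq hc,
    show k + u + v + 1 = (k + 1) + (u + v) by omega, pow_add]
  field_simp
  ring

theorem Kfun_ofReal {μ : ℝ} (hμ : μ ≠ 0) (n k : ℕ) (r : ℝ) :
    Kfun μ n k r = ((√(n ! / (n + k)!) * (1 - μ) ^ (k + 1) * exp (-(1 - μ) * r ^ 2) * r ^ k *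
      μ ^ n * laguerre n k ((2 - μ - μ⁻¹) * r ^ 2) : ℝ) : ℂ) := by
  have key : (μ : ℂ) * (2 - μ - (μ : ℂ)⁻¹) = -(1 - μ) ^ 2 := by
    field_simp [Complex.ofReal_ne_zero.2 hμ]
    ring
  simp only [Kfun, laguerre]
  push_cast
  rw [mul_assoc _ ((μ : ℂ) ^ n)]
  congr 1
  rw [Finset.mul_sum]
  refine Finset.sum_congr rfl fun u hu => ?_
  rw [show (μ : ℂ) ^ n = μ ^ (n - u) * μ ^ u by
    rw [← pow_add, Nat.sub_add_cancel (mem_range_succ_iff.1 hu)]]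
  calc _ = (μ : ℂ) ^ (n - u) * ((-1) * (μ * (2 - μ - (μ : ℂ)⁻¹))) ^ u / u ! *
      ((n + k).choose (n - u) : ℂ) * (r : ℂ) ^ (2 * u) := by
        rw [key, neg_one_mul, neg_neg, ← pow_mul]; ring
    _ = _ := by rw [mul_pow, mul_pow, mul_pow, pow_mul (r : ℂ)]; ring

theorem norm_Kfun_ofReal_le {μ : ℝ} (hμ : μ ≠ 0) (n k : ℕ) (r : ℝ) :
    ‖Kfun μ n k r‖ ≤ |1 - μ| ^ (k + 1) * |μ| ^ n *
      (exp (-(1 - μ) * r ^ 2) * |r| ^ k * |laguerre n k ((2 - μ - μ⁻¹) * r ^ 2)|) := by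
  have hsqrt : √(n ! / (n + k)! : ℝ) ≤ 1 :=
    Real.sqrt_le_one.2 <|
      div_le_one_of_le₀ (by exact_mod_cast Nat.factorial_le (by omega)) (by positivity)
  rw [Kfun_ofReal hμ, Complex.norm_real, Real.norm_eq_abs]
  simp only [abs_mul, abs_pow, abs_of_pos (exp_pos _), abs_of_nonneg (Real.sqrt_nonneg _)]
  calc _ ≤ 1 * |1 - μ| ^ (k + 1) * exp (-(1 - μ) * r ^ 2) * |r| ^ k * |μ| ^ n *
        |laguerre n k ((2 - μ - μ⁻¹) * r ^ 2)| := by gcongr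
    _ = _ := by ring

theorem norm_Kfun_mul_Kfun_inv_mul_le {μ : ℝ} (hμ : μ ≠ 0) (n l k : ℕ) {r : ℝ}
    (hr : 0 ≤ r) :
    ‖Kfun μ n k r * Kfun (μ⁻¹ : ℝ) l k r * r‖ ≤
      |1 - μ| ^ (k + 1) * |1 - μ⁻¹| ^ (k + 1) * |μ⁻¹| ^ l * |μ| ^ n *
        (laguerreGaussSq (2 - μ - μ⁻¹) n k r + laguerreGaussSq (2 - μ - μ⁻¹) l k r) := by
  set c := 2 - μ - μ⁻¹
  set x := c * r ^ 2
  have habs (a b : ℝ) : |a| * |b| ≤ a ^ 2 + b ^ 2 := by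
    nlinarith [sq_nonneg (|a| - |b|), sq_abs a, sq_abs b]
  calc ‖Kfun μ n k r * Kfun (μ⁻¹ : ℝ) l k r * r‖
      = ‖Kfun μ n k r‖ * ‖Kfun (μ⁻¹ : ℝ) l k r‖ * r := by
        rw [norm_mul, norm_mul, Complex.norm_real, Real.norm_of_nonneg hr]
    _ ≤ (|1 - μ| ^ (k + 1) * |μ| ^ n * (exp (-(1 - μ) * r ^ 2) * |r| ^ k * |laguerre n k x|)) *
        (|1 - μ⁻¹| ^ (k + 1) * |μ⁻¹| ^ l *
          (exp (-(1 - μ⁻¹) * r ^ 2) * |r| ^ k * |laguerre l k x|)) * r := by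
        gcongr
        · exact norm_Kfun_ofReal_le hμ n k r
        · have h := norm_Kfun_ofReal_le (inv_ne_zero hμ) l k r
          rwa [inv_inv, show 2 - μ⁻¹ - μ = c by ring] at h
    _ = |1 - μ| ^ (k + 1) * |1 - μ⁻¹| ^ (k + 1) * |μ⁻¹| ^ l * |μ| ^ n *
        (exp (-c * r ^ 2) * r ^ (2 * k + 1) * (|laguerre n k x| * |laguerre l k x|)) := by
        rw [abs_of_nonneg hr, show -c * r ^ 2 = -(1 - μ) * r ^ 2 + -(1 - μ⁻¹) * r ^ 2 by ring,
          exp_add]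
        ring
    _ ≤ _ := by
        rw [laguerreGaussSq, laguerreGaussSq, ← mul_add]
        have := pow_nonneg hr (2 * k + 1)
        gcongr
        exact habs _ _

@[fun_prop]
theorem continuous_Kfun (lam : ℂ) (n k : ℕ) : Continuous (Kfun lam n k) := by
  unfold Kfun
  fun_prop

theorem two_sub_sub_inv_pos {μ : ℝ} (hμ : μ < 0) : 0 < 2 - μ - μ⁻¹ := by
  linarith [inv_lt_zero.2 hμ]

theorem integrableOn_Kfun_mul_Kfun_inv_mul {μ : ℝ} (hμ : μ < 0) (n l k : ℕ) :
    IntegrableOn (fun r : ℝ => Kfun μ n k r * Kfun (μ⁻¹ : ℝ) l k r * r) (Set.Ioi 0) := by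
  have hc := two_sub_sub_inv_pos hμ
  refine Integrable.mono' ?_ (by fun_prop) ((ae_restrict_mem measurableSet_Ioi).mono
    fun r hr => norm_Kfun_mul_Kfun_inv_mul_le hμ.ne n l k (le_of_lt hr))
  exact ((integrableOn_laguerreGaussSq hc n k).add
    (integrableOn_laguerreGaussSq hc l k)).const_mul _

theorem integral_norm_Kfun_mul_Kfun_inv_mul_le {μ : ℝ} (hμ : μ < 0) (n l k : ℕ) :
    ∫ r in Set.Ioi (0 : ℝ), ‖Kfun μ n k r * Kfun (μ⁻¹ : ℝ) l k r * r‖ ≤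
      |1 - μ| ^ (k + 1) * |1 - μ⁻¹| ^ (k + 1) * |μ⁻¹| ^ l * |μ| ^ n *
        (((n + k).descFactorial k + (l + k).descFactorial k) /
          (2 * (2 - μ - μ⁻¹) ^ (k + 1))) := by
  have hc := two_sub_sub_inv_pos hμ
  rw [add_div, ← integral_laguerreGaussSq hc, ← integral_laguerreGaussSq hc,
    ← integral_add (integrableOn_laguerreGaussSq hc n k) (integrableOn_laguerreGaussSq hc l k),
    ← integral_const_mul]
  refine integral_mono_ae (integrableOn_Kfun_mul_Kfun_inv_mul hμ n l k).norm ?_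
    ((ae_restrict_mem measurableSet_Ioi).mono
      fun r hr => norm_Kfun_mul_Kfun_inv_mul_le hμ.ne n l k (le_of_lt hr))
  exact ((integrableOn_laguerreGaussSq hc n k).add
    (integrableOn_laguerreGaussSq hc l k)).const_mul _

theorem summable_integral_norm_Kfun_mul_Kfun_inv_mul {μ : ℝ} (hμ : μ ∈ Set.Ioo (-1) 0)
    (l k : ℕ) :
    Summable fun n => ∫ r in Set.Ioi (0 : ℝ), ‖Kfun μ n k r * Kfun (μ⁻¹ : ℝ) l k r * r‖ := by
  have hμ1 : ‖|μ|‖ < 1 := by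
    rw [Real.norm_eq_abs, abs_abs, abs_lt]; exact ⟨hμ.1, by linarith [hμ.2]⟩
  set D := |1 - μ| ^ (k + 1) * |1 - μ⁻¹| ^ (k + 1) * |μ⁻¹| ^ l
  set C := 2 * (2 - μ - μ⁻¹) ^ (k + 1)
  refine Summable.of_nonneg_of_le (fun n => integral_nonneg fun _ => norm_nonneg _)
    (fun n => integral_norm_Kfun_mul_Kfun_inv_mul_le hμ.2 n l k) ?_
  refine (((summable_descFactorial_mul_geometric_of_norm_lt_one k hμ1).mul_left (D / C)).add
    ((summable_geometric_of_norm_lt_one hμ1).mul_left (D * (l + k).descFactorial k / C))).congr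
    fun n => ?_
  ring

/-- Lemma 1 of the paper: for `λ ∈ (−1,0)`, `|c_n| ≤ 1`, and
`W_k(r) = ∑_n c_n K^λ_{n,n+k}(r)`, the function `r ↦ W_k(r) K^{1/λ}_{l,l+k}(r) r`
is integrable on `[0,∞)`, so is each `r ↦ K^λ_{n,n+k}(r) K^{1/λ}_{l,l+k}(r) r`, and
`∫_0^∞ W_k K^{1/λ}_{l,l+k} r dr = ∑_n c_n ∫_0^∞ K^λ_{n,n+k} K^{1/λ}_{l,l+k} r dr`. -/
theorem stmt_8 (lam : ℝ) (hlam : lam ∈ Set.Ioo (-1 : ℝ) 0) (k l : ℕ)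
    (c : ℕ → ℂ) (hc : ∀ n, ‖c n‖ ≤ 1)
    (W : ℝ → ℂ) (hW : ∀ r, W r = ∑' n : ℕ, c n * Kfun (lam : ℂ) n k r) :
    IntegrableOn (fun r : ℝ => W r * Kfun (1 / (lam : ℂ)) l k r * (r : ℂ)) (Set.Ioi 0) ∧
    (∀ n : ℕ, IntegrableOn
      (fun r : ℝ => Kfun (lam : ℂ) n k r * Kfun (1 / (lam : ℂ)) l k r * (r : ℂ)) (Set.Ioi 0)) ∧
    HasSum
      (fun n : ℕ => c n * ∫ r in Set.Ioi (0 : ℝ),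
        Kfun (lam : ℂ) n k r * Kfun (1 / (lam : ℂ)) l k r * (r : ℂ))
      (∫ r in Set.Ioi (0 : ℝ), W r * Kfun (1 / (lam : ℂ)) l k r * (r : ℂ)) := by
  have hinv : 1 / (lam : ℂ) = ((lam⁻¹ : ℝ) : ℂ) := by push_cast; exact one_div _
  simp only [hinv]
  set F : ℕ → ℝ → ℂ := fun n r => c n * (Kfun lam n k r * Kfun (lam⁻¹ : ℝ) l k r * r)
  have hK_int n := integrableOn_Kfun_mul_Kfun_inv_mul hlam.2 n l k
  have hF_int n : Integrable (F n) (volume.restrict (Set.Ioi 0)) := (hK_int n).const_mul (c n)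
  have hF_sum : Summable fun n => ∫ r in Set.Ioi (0 : ℝ), ‖F n r‖ := by
    refine (summable_integral_norm_Kfun_mul_Kfun_inv_mul hlam l k).of_nonneg_of_le
      (fun n => integral_nonneg fun _ => norm_nonneg _) fun n => ?_
    simp only [F, norm_mul (c n), integral_const_mul]
    exact mul_le_of_le_one_left (integral_nonneg fun _ => norm_nonneg _) (hc n)
  have hWF : (fun r : ℝ => W r * Kfun (lam⁻¹ : ℝ) l k r * r) = fun r => ∑' n, F n r := by
    funext r
    rw [hW, ← tsum_mul_right, ← tsum_mul_right]
    exact tsum_congr fun n => by ring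
  rw [hWF]
  refine ⟨integrable_tsum_of_summable_integral_norm hF_int hF_sum, hK_int, ?_⟩
  simpa only [F, integral_const_mul] using hasSum_integral_of_summable_integral_norm hF_int hF_sum
end

section
/- Let λ ∈ ℂ with |λ| < 1, let k ∈ ℕ, and let (c_n)_{n∈ℕ} be a sequence of complex numbers with |c_n| ≤ 1 for all n. Then there exists ε > 0 such that for every l ∈ ℕ the series of functions ∑_{n=0}^∞ c_n·(d^l/dr^l)[e^{(1−λ)r²}·K^λ_{n,n+k}(r)] converges uniformly on [0, ε) (i.e., the partial sums converge uniformly on [0, ε)). -/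
open MeasureTheory Filter

/-!
The function `e^{(1−λ)r²} K^λ_{n,n+k}(r)` is the polynomial `∑_{u ≤ n} B_{n,u} r^{2u+k}`. On
`[0, ε]` its `l`-th derivative is at most `(2n+k)^l ε^{-l} ∑_u |B_{n,u}| ε^{2u+k}`. Dropping the
factors `√(n!/(n+k)!)` and `1/u!`, which are at most `1`, the binomial theorem bounds this weighted
sum by a constant times `(|λ| + |1−λ|²ε²)^n`. Choosing `ε` with `|1−λ|²ε² = (1−|λ|)/2` makes the
base `(1+|λ|)/2 < 1`, and the Weierstrass M-test applies for every `l`.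
-/

open Finset

noncomputable def kfunCoeff (lam : ℂ) (n k u : ℕ) : ℂ :=
  ((Real.sqrt ((n.factorial : ℝ) / ((n + k).factorial : ℝ)) : ℝ) : ℂ) * (1 - lam) ^ (k + 1) *
    (lam ^ (n - u) / (u.factorial : ℂ) * (((n + k).choose (n - u) : ℕ) : ℂ) * (1 - lam) ^ (2 * u))

theorem exp_mul_Kfun_eq_sum (lam : ℂ) (n k : ℕ) :
    (fun s : ℝ => Complex.exp ((1 - lam) * (s : ℂ) ^ 2) * Kfun lam n k s) =
      fun s : ℝ => ∑ u ∈ range (n + 1), kfunCoeff lam n k u * (s : ℂ) ^ (2 * u + k) := by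
  funext s
  have hexp := Complex.exp_ne_zero ((1 - lam) * (s : ℂ) ^ 2)
  rw [Kfun, neg_mul, Complex.exp_neg, mul_sum, mul_sum]
  refine sum_congr rfl fun u _ => ?_
  rw [kfunCoeff, pow_add]
  field_simp
  ring

theorem iteratedDeriv_sum_mul_ofReal_pow (F : Finset ℕ) (a : ℕ → ℂ) (m : ℕ → ℕ) (l : ℕ) :
    iteratedDeriv l (fun s : ℝ => ∑ u ∈ F, a u * (s : ℂ) ^ m u) =
      fun r : ℝ => ∑ u ∈ F, a u * ((m u).descFactorial l : ℂ) * (r : ℂ) ^ (m u - l) := by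
  induction l with
  | zero => simp
  | succ l ih =>
    rw [iteratedDeriv_succ, ih]
    funext x
    refine (HasDerivAt.fun_sum fun u _ => ?_).deriv
    refine (((hasDerivAt_pow (m u - l) (x : ℂ)).const_mul
      (a u * ((m u).descFactorial l : ℂ))).comp_ofReal).congr_deriv ?_
    rw [Nat.descFactorial_succ, show m u - (l + 1) = m u - l - 1 by omega]
    push_cast
    ring

theorem descFactorial_mul_pow_mul_pow_le {r ε : ℝ} (hr : 0 ≤ r) (hrε : r ≤ ε) (m l : ℕ) :
    (m.descFactorial l : ℝ) * r ^ (m - l) * ε ^ l ≤ (m : ℝ) ^ l * ε ^ m := by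
  have hε : 0 ≤ ε := hr.trans hrε
  rcases lt_or_ge m l with hml | hlm
  · rw [Nat.descFactorial_eq_zero_iff_lt.2 hml]
    simp only [Nat.cast_zero, zero_mul]
    positivity
  · calc (m.descFactorial l : ℝ) * r ^ (m - l) * ε ^ l ≤ (m : ℝ) ^ l * ε ^ (m - l) * ε ^ l := by
          gcongr
          exact_mod_cast Nat.descFactorial_le_pow m l
      _ = (m : ℝ) ^ l * ε ^ m := by rw [mul_assoc, ← pow_add, Nat.sub_add_cancel hlm]

theorem norm_sum_descFactorial_mul_pow_le (F : Finset ℕ) (a : ℕ → ℂ) (m : ℕ → ℕ) (l : ℕ) {D : ℕ}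
    (hD : ∀ u ∈ F, m u ≤ D) {r ε : ℝ} (hr : 0 ≤ r) (hrε : r ≤ ε) :
    ‖∑ u ∈ F, a u * ((m u).descFactorial l : ℂ) * (r : ℂ) ^ (m u - l)‖ * ε ^ l ≤
      (D : ℝ) ^ l * ∑ u ∈ F, ‖a u‖ * ε ^ m u := by
  have hε : 0 ≤ ε := hr.trans hrε
  calc ‖∑ u ∈ F, a u * ((m u).descFactorial l : ℂ) * (r : ℂ) ^ (m u - l)‖ * ε ^ l
      ≤ ∑ u ∈ F, ‖a u‖ * ((m u).descFactorial l * r ^ (m u - l) * ε ^ l) := by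
        refine (mul_le_mul_of_nonneg_right (norm_sum_le _ _) (by positivity)).trans_eq ?_
        rw [sum_mul]
        refine sum_congr rfl fun u _ => ?_
        simp only [norm_mul, norm_pow, Complex.norm_natCast, Complex.norm_real, Real.norm_eq_abs,
          abs_of_nonneg hr]
        ring
    _ ≤ ∑ u ∈ F, ‖a u‖ * ((m u : ℝ) ^ l * ε ^ m u) := by
        refine sum_le_sum fun u _ => mul_le_mul_of_nonneg_left ?_ (norm_nonneg _)
        exact descFactorial_mul_pow_mul_pow_le hr hrε (m u) l
    _ ≤ ∑ u ∈ F, (D : ℝ) ^ l * (‖a u‖ * ε ^ m u) := by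
        refine sum_le_sum fun u hu => ?_
        rw [mul_left_comm]
        gcongr
        exact_mod_cast hD u hu
    _ = (D : ℝ) ^ l * ∑ u ∈ F, ‖a u‖ * ε ^ m u := (mul_sum _ _ _).symm

theorem sum_choose_mul_pow_mul_pow_le {a x : ℝ} (ha : 0 ≤ a) (hx : 0 ≤ x) (n k : ℕ) :
    ∑ u ∈ range (n + 1), ((n + k).choose (n - u) : ℝ) * a ^ (n - u) * x ^ (u + k) ≤
      (a + x) ^ (n + k) := by
  calc ∑ u ∈ range (n + 1), ((n + k).choose (n - u) : ℝ) * a ^ (n - u) * x ^ (u + k)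
      = ∑ j ∈ range (n + 1), a ^ j * x ^ (n + k - j) * ((n + k).choose j : ℝ) := by
        rw [← sum_range_reflect]
        refine sum_congr rfl fun u hu_mem => ?_
        have hu : u ≤ n := Nat.lt_succ_iff.1 (mem_range.1 hu_mem)
        rw [Nat.add_sub_cancel, Nat.sub_sub_self hu, show n - u + k = n + k - u by omega]
        ring
    _ ≤ ∑ j ∈ range (n + k + 1), a ^ j * x ^ (n + k - j) * ((n + k).choose j : ℝ) :=
        sum_le_sum_of_subset_of_nonneg (range_subset_range.2 (by omega))
          fun _ _ _ => by positivity
    _ = (a + x) ^ (n + k) := (add_pow a x (n + k)).symm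

theorem norm_kfunCoeff_le (lam : ℂ) (n k u : ℕ) :
    ‖kfunCoeff lam n k u‖ ≤
      ‖1 - lam‖ ^ (k + 1) *
        (((n + k).choose (n - u) : ℝ) * ‖lam‖ ^ (n - u) * ‖1 - lam‖ ^ (2 * u)) := by
  have hsqrt : Real.sqrt ((n.factorial : ℝ) / ((n + k).factorial : ℝ)) ≤ 1 := by
    rw [Real.sqrt_le_one, div_le_one (by positivity)]
    exact_mod_cast Nat.factorial_le (Nat.le_add_right n k)
  have hfact : ‖lam‖ ^ (n - u) / (u.factorial : ℝ) ≤ ‖lam‖ ^ (n - u) :=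
    div_le_self (by positivity) (by exact_mod_cast u.factorial_pos)
  simp only [kfunCoeff, norm_mul, norm_div, norm_pow, Complex.norm_real, Complex.norm_natCast,
    Real.norm_eq_abs, abs_of_nonneg (Real.sqrt_nonneg _)]
  calc _ ≤ 1 * ‖1 - lam‖ ^ (k + 1) *
        (‖lam‖ ^ (n - u) * ((n + k).choose (n - u) : ℝ) * ‖1 - lam‖ ^ (2 * u)) := by gcongr
    _ = _ := by ring

theorem sum_norm_kfunCoeff_mul_pow_le (lam : ℂ) (n k : ℕ) {ε : ℝ} (hε : 0 ≤ ε) :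
    ‖1 - lam‖ ^ (2 * k) * ε ^ k * ∑ u ∈ range (n + 1), ‖kfunCoeff lam n k u‖ * ε ^ (2 * u + k) ≤
      ‖1 - lam‖ ^ (k + 1) * (‖lam‖ + (‖1 - lam‖ * ε) ^ 2) ^ (n + k) := by
  set b := ‖1 - lam‖
  calc b ^ (2 * k) * ε ^ k * ∑ u ∈ range (n + 1), ‖kfunCoeff lam n k u‖ * ε ^ (2 * u + k)
      ≤ b ^ (2 * k) * ε ^ k * ∑ u ∈ range (n + 1),
          b ^ (k + 1) * (((n + k).choose (n - u) : ℝ) * ‖lam‖ ^ (n - u) * b ^ (2 * u)) *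
            ε ^ (2 * u + k) := by
        gcongr with u
        exact norm_kfunCoeff_le lam n k u
    _ = b ^ (k + 1) * ∑ u ∈ range (n + 1),
          ((n + k).choose (n - u) : ℝ) * ‖lam‖ ^ (n - u) * ((b * ε) ^ 2) ^ (u + k) := by
        rw [mul_sum, mul_sum]
        refine sum_congr rfl fun u _ => ?_
        ring
    _ ≤ b ^ (k + 1) * (‖lam‖ + (b * ε) ^ 2) ^ (n + k) := by
        gcongr
        exact sum_choose_mul_pow_mul_pow_le (norm_nonneg lam) (sq_nonneg _) n k

theorem norm_iteratedDeriv_exp_mul_Kfun_le (lam : ℂ) (n k l : ℕ) {r ε : ℝ} (hr : 0 ≤ r)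
    (hrε : r ≤ ε) :
    ‖iteratedDeriv l (fun s : ℝ => Complex.exp ((1 - lam) * (s : ℂ) ^ 2) * Kfun lam n k s) r‖ *
        (ε ^ l * (‖1 - lam‖ ^ (2 * k) * ε ^ k)) ≤
      ((2 * n + k : ℕ) : ℝ) ^ l *
        (‖1 - lam‖ ^ (k + 1) * (‖lam‖ + (‖1 - lam‖ * ε) ^ 2) ^ (n + k)) := by
  have hε : 0 ≤ ε := hr.trans hrε
  have hdeg : ∀ u ∈ range (n + 1), 2 * u + k ≤ 2 * n + k := fun u hu => by
    have := mem_range.1 hu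
    omega
  have hpoly := norm_sum_descFactorial_mul_pow_le (range (n + 1)) (kfunCoeff lam n k)
    (fun u => 2 * u + k) l hdeg hr hrε
  have hsum := sum_norm_kfunCoeff_mul_pow_le lam n k hε
  rw [exp_mul_Kfun_eq_sum, iteratedDeriv_sum_mul_ofReal_pow, ← mul_assoc]
  calc _ ≤ ((2 * n + k : ℕ) : ℝ) ^ l *
        (∑ u ∈ range (n + 1), ‖kfunCoeff lam n k u‖ * ε ^ (2 * u + k)) *
          (‖1 - lam‖ ^ (2 * k) * ε ^ k) := mul_le_mul_of_nonneg_right hpoly (by positivity)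
    _ = ((2 * n + k : ℕ) : ℝ) ^ l * (‖1 - lam‖ ^ (2 * k) * ε ^ k *
          ∑ u ∈ range (n + 1), ‖kfunCoeff lam n k u‖ * ε ^ (2 * u + k)) := by ring
    _ ≤ _ := mul_le_mul_of_nonneg_left hsum (by positivity)

theorem summable_mul_add_pow_mul_geometric (a b : ℝ) (l : ℕ) {ρ : ℝ} (hρ : ‖ρ‖ < 1) :
    Summable fun n : ℕ => (a * n + b) ^ l * ρ ^ n := by
  have hexpand : (fun n : ℕ => (a * n + b) ^ l * ρ ^ n) = fun n : ℕ =>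
      ∑ i ∈ range (l + 1), a ^ i * b ^ (l - i) * (l.choose i : ℝ) * ((n : ℝ) ^ i * ρ ^ n) := by
    funext n
    rw [add_pow, sum_mul]
    refine sum_congr rfl fun i _ => ?_
    ring
  rw [hexpand]
  exact summable_sum fun i _ => (summable_pow_mul_geometric_of_norm_lt_one i hρ).mul_left _

/-- Lemma 3 of the paper: for `|λ| < 1` and `|c_n| ≤ 1`, there is `ε > 0` such that for
every `l` the series `∑_n c_n (d^l/dr^l)[e^{(1−λ)r²} K^λ_{n,n+k}(r)]` converges
uniformly on `[0, ε)`. -/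
theorem stmt_11 (lam : ℂ) (hlam : ‖lam‖ < 1) (k : ℕ)
    (c : ℕ → ℂ) (hc : ∀ n, ‖c n‖ ≤ 1) :
    ∃ ε > (0 : ℝ), ∀ l : ℕ, ∃ g : ℝ → ℂ,
      TendstoUniformlyOn
        (fun N r => ∑ n ∈ Finset.range N,
          c n * iteratedDeriv l (fun s : ℝ => Complex.exp ((1 - lam) * (s : ℂ) ^ 2) * Kfun lam n k s) r)
        g atTop (Set.Ico (0 : ℝ) ε) := by
  set b := ‖1 - lam‖
  have hb : 0 < b := norm_pos_iff.2 (sub_ne_zero.2 fun h => by simp [← h] at hlam)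
  set ρ := (1 + ‖lam‖) / 2 with hρ
  set ε := Real.sqrt ((1 - ‖lam‖) / 2) / b
  have hε : 0 < ε := div_pos (Real.sqrt_pos.2 (by linarith)) hb
  have hbase : ‖lam‖ + (b * ε) ^ 2 = ρ := by
    rw [mul_div_cancel₀ _ hb.ne', Real.sq_sqrt (by linarith)]
    ring
  refine ⟨ε, hε, fun l => ⟨_, tendstoUniformlyOn_tsum_nat
    (u := fun n => b ^ (k + 1) * ρ ^ k / (ε ^ l * (b ^ (2 * k) * ε ^ k)) *
      ((2 * n + k) ^ l * ρ ^ n)) ?_ ?_⟩⟩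
  · refine (summable_mul_add_pow_mul_geometric 2 k l ?_).mul_left _
    rw [Real.norm_eq_abs, abs_of_nonneg (by positivity)]
    linarith
  · rintro n r ⟨hr, hrε⟩
    have hbound := norm_iteratedDeriv_exp_mul_Kfun_le lam n k l hr hrε.le
    rw [hbase, ← le_div_iff₀ (by positivity)] at hbound
    rw [norm_mul]
    refine (mul_le_of_le_one_left (norm_nonneg _) (hc n)).trans (hbound.trans_eq ?_)
    push_cast
    ring
end

section
/- Let λ ∈ ℂ with 0 < |λ| < 1, let (c_n)_{n∈ℕ} be a sequence of complex numbers with |c_n| ≤ 1 for all n, and let h, j ∈ ℕ. Then the (2j+1)-th derivative at r = 0 of the function r ↦ e^{(1−λ)r²}·∑_{n=0}^∞ c_n·K^λ_{n,n+2h+1}(r) exists and equals C(2j+1, j−h)·(1−λ)^{2j+2}·λ^{h−j}·∑_{n=max(0, j−h)}^∞ c_n·λ^n·√((n+2h+1)!·n!)/(n−j+h)!, where C(2j+1, j−h) denotes the binomial coefficient, interpreted as 0 when j < h, and the series on the right converges absolutely. -/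
/-!
Multiplying by `e^{(1-λ)r²}` cancels the Gaussian factor of every `K^λ_{n,n+k}`, so the function is
the double series `∑_{u,s} A(u,s) r^{k+2u}` of the terms of the finite sums, with `n = u + s`.
Since `∑_s C(s+u+k, s) |λ|^s = (1-|λ|)^{-(u+k+1)}`, this double series converges absolutely for
every `r` and may be summed over `s` first: the function is an entire power series in `r` whose
coefficient of `r^{k+2u}` is `∑_s A(u,s)`, all other coefficients vanishing. The derivative of
order `2j+1` at `0` is `(2j+1)!` times the coefficient of `r^{2j+1}`, which is zero unless `h ≤ j`;
in that case `(2j+1)! A(j-h, m)` is, after the factorial identity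
`(2j+1)! C(n+k, m) m! = C(2j+1, j-h) (n+k)! (j-h)!` with `n = j-h+m`, the `m`-th term of the
stated series.
-/

open MeasureTheory Filter

open Finset

theorem Nat.factorial_add_mul_choose_mul_factorial (d e m : ℕ) :
    (d + e).factorial * (m + e).choose m * m.factorial =
      (d + e).choose d * (m + e).factorial * d.factorial := by
  apply Nat.eq_of_mul_eq_mul_right e.factorial_pos
  rw [← Nat.add_choose_mul_factorial_mul_factorial m e,
    ← Nat.add_choose_mul_factorial_mul_factorial d e, Nat.choose_symm_add, @Nat.choose_symm_add d]
  ring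

theorem Real.sqrt_div_mul_self {x y : ℝ} (hy : 0 ≤ y) : √(x / y) * y = √(y * x) := by
  rw [Real.sqrt_div' x hy, Real.sqrt_mul hy]
  rcases hy.eq_or_lt with rfl | hy
  · simp
  · field_simp
    rw [Real.sq_sqrt hy.le]

theorem HasSum.sum_antidiagonal {α A : Type*} [AddCommMonoid α] [TopologicalSpace α]
    [ContinuousAdd α] [RegularSpace α] [AddCommMonoid A] [HasAntidiagonal A]
    {f : A × A → α} {a : α} (hf : HasSum f a) :
    HasSum (fun n => ∑ x ∈ antidiagonal n, f x) a :=
  (HasAntidiagonal.sigmaAntidiagonalEquivProd.hasSum_iff.mpr hf).sigma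
    fun n => (antidiagonal n).hasSum f

theorem summable_pow_div_factorial_mul_choose_mul_geometric {X L : ℝ} (hX : 0 ≤ X) (hL0 : 0 ≤ L)
    (hL1 : L < 1) (k : ℕ) :
    Summable fun p : ℕ × ℕ =>
      X ^ p.1 / p.1.factorial * ((p.2 + (p.1 + k)).choose (p.1 + k) * L ^ p.2) := by
  have hL : ‖L‖ < 1 := by rwa [Real.norm_of_nonneg hL0]
  have hnonneg : 0 ≤ fun p : ℕ × ℕ =>
      X ^ p.1 / p.1.factorial * ((p.2 + (p.1 + k)).choose (p.1 + k) * L ^ p.2) :=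
    fun p => by dsimp; positivity
  refine (summable_prod_of_nonneg hnonneg).mpr ⟨fun u => ?_, ?_⟩
  · exact (summable_choose_mul_geometric_of_norm_lt_one (u + k) hL).mul_left (X ^ u / u.factorial)
  have hsub : 0 < 1 - L := by linarith
  have hrow (u : ℕ) : ∑' s : ℕ, X ^ u / u.factorial * ((s + (u + k)).choose (u + k) * L ^ s) =
      (X / (1 - L)) ^ u / u.factorial * (1 / (1 - L) ^ (k + 1)) := by
    rw [tsum_mul_left, tsum_choose_mul_geometric_of_norm_lt_one _ hL, div_pow]
    field_simp
    ring
  simp only [hrow]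
  exact (Real.summable_pow_div_factorial _).mul_right _

section PowerSeries

variable {𝕜 E : Type*} [RCLike 𝕜] [NormedAddCommGroup E] [NormedSpace 𝕜 E]
  {f : 𝕜 → E} {a : ℕ → E}

theorem hasFPowerSeriesOnBall_mkPiRing_of_forall_hasSum
    (h : ∀ y, HasSum (fun n => y ^ n • a n) (f y)) :
    HasFPowerSeriesOnBall f (fun n => ContinuousMultilinearMap.mkPiRing 𝕜 (Fin n) (a n)) 0 ⊤ where
  r_le := by
    refine (ENNReal.eq_top_of_forall_nnreal_le fun r =>
      FormalMultilinearSeries.le_radius_of_tendsto (𝕜 := 𝕜) (E := 𝕜) _ (l := 0) ?_).ge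
    simpa [ContinuousMultilinearMap.norm_mkPiRing, norm_smul, mul_comm]
      using ((h ((r : ℝ) : 𝕜)).summable.tendsto_atTop_zero).norm
  r_pos := ENNReal.zero_lt_top
  hasSum {y} _ := by
    simpa [ContinuousMultilinearMap.mkPiRing_apply] using h y

theorem iteratedDeriv_zero_eq_factorial_smul_of_forall_hasSum [CompleteSpace E]
    (h : ∀ y, HasSum (fun n => y ^ n • a n) (f y)) (n : ℕ) :
    iteratedDeriv n f 0 = n.factorial • a n := by
  rw [iteratedDeriv_eq_iteratedFDeriv,
    ← (hasFPowerSeriesOnBall_mkPiRing_of_forall_hasSum h).factorial_smul]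
  simp [ContinuousMultilinearMap.mkPiRing_apply]

end PowerSeries

-- The coefficient of `r^{k+2u}` in `e^{(1-λ)r²} c_n K^λ_{n,n+k}(r)` for `n = u + s`.
noncomputable def kernelCoeff (lam : ℂ) (c : ℕ → ℂ) (k u s : ℕ) : ℂ :=
  c (u + s) * ((√(((u + s).factorial : ℝ) / ((u + s + k).factorial : ℝ)) : ℝ) : ℂ) *
    (1 - lam) ^ (k + 1) * (lam ^ s / (u.factorial : ℂ)) * (((u + s + k).choose s : ℕ) : ℂ) *
    (1 - lam) ^ (2 * u)

noncomputable def kernelSeries (lam : ℂ) (c : ℕ → ℂ) (k : ℕ) (r : ℝ) : ℂ :=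
  Complex.exp ((1 - lam) * (r : ℂ) ^ 2) * ∑' n : ℕ, c n * Kfun lam n k r

theorem exp_mul_mul_Kfun_eq_sum_antidiagonal (lam : ℂ) (c : ℕ → ℂ) (k n : ℕ) (r : ℝ) :
    Complex.exp ((1 - lam) * (r : ℂ) ^ 2) * (c n * Kfun lam n k r) =
      ∑ x ∈ antidiagonal n, kernelCoeff lam c k x.1 x.2 * (r : ℂ) ^ (k + 2 * x.1) := by
  have hexp : Complex.exp ((1 - lam) * (r : ℂ) ^ 2) *
      Complex.exp (-(1 - lam) * (r : ℂ) ^ 2) = 1 := by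
    rw [← Complex.exp_add, neg_mul, add_neg_cancel, Complex.exp_zero]
  rw [Finset.Nat.sum_antidiagonal_eq_sum_range_succ
    (fun u s : ℕ => kernelCoeff lam c k u s * (r : ℂ) ^ (k + 2 * u)), Kfun]
  simp only [mul_sum]
  refine Finset.sum_congr rfl fun u hu => ?_
  rw [kernelCoeff, Nat.add_sub_cancel' (Nat.lt_succ_iff.mp (mem_range.mp hu))]
  linear_combination (c n * ((√((n.factorial : ℝ) / ((n + k).factorial : ℝ)) : ℝ) : ℂ) *
    (1 - lam) ^ (k + 1) * (lam ^ (n - u) / (u.factorial : ℂ)) *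
    (((n + k).choose (n - u) : ℕ) : ℂ) * (1 - lam) ^ (2 * u) * (r : ℂ) ^ (k + 2 * u)) * hexp

theorem norm_kernelCoeff_le {lam : ℂ} {c : ℕ → ℂ} (hc : ∀ n, ‖c n‖ ≤ 1) (k u s : ℕ) :
    ‖kernelCoeff lam c k u s‖ ≤ ‖1 - lam‖ ^ (k + 1) *
      (‖1 - lam‖ ^ (2 * u) / u.factorial * ((s + (u + k)).choose (u + k) * ‖lam‖ ^ s)) := by
  have hsqrt : √(((u + s).factorial : ℝ) / ((u + s + k).factorial : ℝ)) ≤ 1 :=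
    Real.sqrt_le_one.mpr <| div_le_one_of_le₀ (mod_cast Nat.factorial_le (by omega)) (by positivity)
  have hchoose : (u + s + k).choose s = (s + (u + k)).choose (u + k) := by
    rw [show u + s + k = s + (u + k) by ring, Nat.choose_symm_add]
  calc ‖kernelCoeff lam c k u s‖
      = ‖c (u + s)‖ * √(((u + s).factorial : ℝ) / ((u + s + k).factorial : ℝ)) *
          (‖1 - lam‖ ^ (k + 1) * (‖1 - lam‖ ^ (2 * u) / u.factorial *
            ((s + (u + k)).choose (u + k) * ‖lam‖ ^ s))) := by
        simp only [kernelCoeff, norm_mul, norm_div, norm_pow, Complex.norm_real, Real.norm_eq_abs,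
          Complex.norm_natCast, abs_of_nonneg (Real.sqrt_nonneg _), hchoose]
        ring
    _ ≤ 1 * 1 * (‖1 - lam‖ ^ (k + 1) * (‖1 - lam‖ ^ (2 * u) / u.factorial *
            ((s + (u + k)).choose (u + k) * ‖lam‖ ^ s))) := by
        gcongr
        exact hc _
    _ = _ := by ring

section KernelSeries

variable {lam : ℂ} {c : ℕ → ℂ}

theorem summable_kernelCoeff_mul_pow (hlam : ‖lam‖ < 1) (hc : ∀ n, ‖c n‖ ≤ 1) (k : ℕ) (r : ℝ) :
    Summable fun p : ℕ × ℕ => kernelCoeff lam c k p.1 p.2 * (r : ℂ) ^ (k + 2 * p.1) := by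
  refine .of_norm_bounded (((summable_pow_div_factorial_mul_choose_mul_geometric
    (X := (‖1 - lam‖ * |r|) ^ 2) (by positivity) (norm_nonneg lam) hlam k)).mul_left
      (‖1 - lam‖ ^ (k + 1) * |r| ^ k)) fun p => ?_
  rw [norm_mul, norm_pow, Complex.norm_real, Real.norm_eq_abs]
  calc _ ≤ ‖1 - lam‖ ^ (k + 1) * (‖1 - lam‖ ^ (2 * p.1) / p.1.factorial *
        ((p.2 + (p.1 + k)).choose (p.1 + k) * ‖lam‖ ^ p.2)) * |r| ^ (k + 2 * p.1) :=
        mul_le_mul_of_nonneg_right (norm_kernelCoeff_le hc k p.1 p.2) (by positivity)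
    _ = _ := by ring

theorem hasSum_kernelSeries (hlam : ‖lam‖ < 1) (hc : ∀ n, ‖c n‖ ≤ 1) (k : ℕ) (r : ℝ) :
    HasSum (fun u => (∑' s, kernelCoeff lam c k u s) * (r : ℂ) ^ (k + 2 * u))
      (kernelSeries lam c k r) := by
  obtain ⟨S, hS⟩ := summable_kernelCoeff_mul_pow hlam hc k r
  have hF : kernelSeries lam c k r = S := by
    rw [kernelSeries, ← tsum_mul_left]
    simp_rw [exp_mul_mul_Kfun_eq_sum_antidiagonal]
    exact hS.sum_antidiagonal.tsum_eq
  rw [hF]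
  refine hS.prod_fiberwise fun u => ?_
  rw [← tsum_mul_right]
  exact (hS.summable.prod_factor u).hasSum

variable (lam c) in
noncomputable def kernelSeriesCoeff (k : ℕ) : ℕ → ℂ :=
  Function.extend (fun u => k + 2 * u) (fun u => ∑' s, kernelCoeff lam c k u s) 0

theorem kernelSeriesCoeff_add_two_mul (k u : ℕ) :
    kernelSeriesCoeff lam c k (k + 2 * u) = ∑' s, kernelCoeff lam c k u s :=
  Function.Injective.extend_apply (fun u v huv => by simpa using huv) _ _ u

theorem kernelSeriesCoeff_eq_zero {k l : ℕ} (hl : ∀ u, k + 2 * u ≠ l) :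
    kernelSeriesCoeff lam c k l = 0 :=
  Function.extend_apply' _ _ _ fun ⟨u, hu⟩ => hl u hu

theorem hasSum_kernelSeriesCoeff (hlam : ‖lam‖ < 1) (hc : ∀ n, ‖c n‖ ≤ 1) (k : ℕ) (r : ℝ) :
    HasSum (fun l => r ^ l • kernelSeriesCoeff lam c k l) (kernelSeries lam c k r) := by
  have hinj : Function.Injective fun u => k + 2 * u := fun u v huv => by simpa using huv
  refine (hinj.hasSum_iff fun l hl => ?_).mp ?_
  · rw [kernelSeriesCoeff_eq_zero fun u hu => hl ⟨u, hu⟩, smul_zero]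
  · convert hasSum_kernelSeries hlam hc k r using 2 with u
    rw [Function.comp_apply, kernelSeriesCoeff_add_two_mul, Complex.real_smul, mul_comm]
    norm_cast

end KernelSeries

theorem factorial_mul_kernelCoeff {lam : ℂ} (hlam : lam ≠ 0) (c : ℕ → ℂ) {h j : ℕ} (hhj : h ≤ j)
    (m : ℕ) :
    (((2 * j + 1).factorial : ℕ) : ℂ) * kernelCoeff lam c (2 * h + 1) (j - h) m =
      (((2 * j + 1).choose (j - h) : ℕ) : ℂ) * (1 - lam) ^ (2 * j + 2) *
        lam ^ ((h : ℤ) - (j : ℤ)) *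
        (c ((j - h) + m) * lam ^ ((j - h) + m) *
          ((Real.sqrt ((((j - h) + m + 2 * h + 1).factorial : ℝ) *
            (((j - h) + m).factorial : ℝ)) : ℝ) : ℂ) /
          ((((j - h) + m + h - j).factorial : ℕ) : ℂ)) := by
  obtain ⟨d, rfl⟩ : ∃ d, j = h + d := ⟨j - h, by omega⟩
  have hchoose : (((2 * (h + d) + 1).factorial : ℕ) : ℂ) *
      ((d + m + (2 * h + 1)).choose m : ℕ) * (m.factorial : ℂ) =
      ((2 * (h + d) + 1).choose d : ℕ) * ((d + m + (2 * h + 1)).factorial : ℕ) *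
        (d.factorial : ℂ) := by
    have := Nat.factorial_add_mul_choose_mul_factorial d (d + 2 * h + 1) m
    rw [show d + (d + 2 * h + 1) = 2 * (h + d) + 1 by ring,
      show m + (d + 2 * h + 1) = d + m + (2 * h + 1) by ring] at this
    exact_mod_cast this
  rw [show h + d - h = d by omega, show d + m + h - (h + d) = m by omega,
    show d + m + 2 * h + 1 = d + m + (2 * h + 1) by ring,
    show ((h : ℤ) - ((h + d : ℕ) : ℤ)) = -(d : ℤ) by push_cast; ring, zpow_neg, zpow_natCast,
    ← Real.sqrt_div_mul_self (by positivity), kernelCoeff, Complex.ofReal_mul,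
    Complex.ofReal_natCast]
  have hd : (d.factorial : ℂ) ≠ 0 := Nat.cast_ne_zero.mpr d.factorial_ne_zero
  have hm : (m.factorial : ℂ) ≠ 0 := Nat.cast_ne_zero.mpr m.factorial_ne_zero
  field_simp
  linear_combination (c (d + m) *
    ((√(((d + m).factorial : ℝ) / ((d + m + (2 * h + 1)).factorial : ℝ)) : ℝ) : ℂ) *
    (1 - lam) ^ (2 * h + 2) * (1 - lam) ^ (2 * d) * lam ^ (d + m)) * hchoose

theorem summable_norm_mul_pow_mul_sqrt_div_factorial {lam : ℂ} (hlam : ‖lam‖ < 1) {c : ℕ → ℂ}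
    (hc : ∀ n, ‖c n‖ ≤ 1) (d k : ℕ) {g : ℕ → ℕ} (hg : ∀ m, m ≤ g m) :
    Summable fun m => ‖c (d + m) * lam ^ (d + m) *
      ((√(((d + m + k).factorial : ℝ) * ((d + m).factorial : ℝ)) : ℝ) : ℂ) /
      (((g m).factorial : ℕ) : ℂ)‖ := by
  refine .of_nonneg_of_le (fun _ => norm_nonneg _) (fun m => ?_)
    ((summable_choose_mul_geometric_of_norm_lt_one (r := ‖lam‖) (d + k)
      (by rwa [norm_norm])).mul_left ((d + k).factorial : ℝ))
  have hsqrt :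
      √(((d + m + k).factorial : ℝ) * ((d + m).factorial : ℝ)) ≤ (d + m + k).factorial :=
    (Real.sqrt_le_left (by positivity)).mpr <| by
      rw [sq]
      exact mul_le_mul_of_nonneg_left (mod_cast Nat.factorial_le (by omega)) (by positivity)
  have hfactorial : ((d + m + k).factorial : ℝ) =
      (d + k).factorial * (m + (d + k)).choose (d + k) * m.factorial := by
    rw [show d + m + k = m + (d + k) by ring, ← Nat.add_choose_mul_factorial_mul_factorial]
    push_cast
    ring
  simp only [norm_div, norm_mul, norm_pow, Complex.norm_real, Real.norm_eq_abs,
    Complex.norm_natCast, abs_of_nonneg (Real.sqrt_nonneg _)]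
  calc ‖c (d + m)‖ * ‖lam‖ ^ (d + m) *
        √(((d + m + k).factorial : ℝ) * ((d + m).factorial : ℝ)) / ((g m).factorial : ℝ)
      ≤ 1 * ‖lam‖ ^ m * (d + m + k).factorial / m.factorial := by
        gcongr ?_ * ?_ * ?_ / ?_
        · exact hc _
        · exact pow_le_pow_of_le_one (norm_nonneg _) hlam.le (by omega)
        · exact_mod_cast Nat.factorial_le (hg m)
    _ = _ := by
        rw [hfactorial]
        field_simp

/-- Odd case of the differentiated series (equation (17) of the paper):
for `0 < |λ| < 1`, `|c_n| ≤ 1`, `k = 2h+1`, `l = 2j+1`, the `(2j+1)`-th derivative at `0`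
of `r ↦ e^{(1−λ)r²} ∑_n c_n K^λ_{n,n+2h+1}(r)` exists and equals
`C(2j+1, j−h) (1−λ)^{2j+2} λ^{h−j} ∑_{n=max(0,j−h)}^∞ c_n λ^n √((n+2h+1)! n!)/(n−j+h)!`,
the series converging absolutely. -/
theorem stmt_13 (lam : ℂ) (hlam0 : 0 < ‖lam‖) (hlam1 : ‖lam‖ < 1)
    (c : ℕ → ℂ) (hc : ∀ n, ‖c n‖ ≤ 1) (h j : ℕ)
    (F : ℝ → ℂ)
    (hF : ∀ r : ℝ, F r = Complex.exp ((1 - lam) * (r : ℂ) ^ 2) *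
      ∑' n : ℕ, c n * Kfun lam n (2 * h + 1) r) :
    Summable (fun m : ℕ => ‖
      (c ((j - h) + m) * lam ^ ((j - h) + m) *
        ((Real.sqrt ((((j - h) + m + 2 * h + 1).factorial : ℝ) * (((j - h) + m).factorial : ℝ)) : ℝ) : ℂ) /
        ((((j - h) + m + h - j).factorial : ℕ) : ℂ))‖) ∧
    ContDiffAt ℝ ((2 * j + 1 : ℕ) : ℕ∞) F 0 ∧
    iteratedDeriv (2 * j + 1) F 0 =
      (if h ≤ j then (((2 * j + 1).choose (j - h) : ℕ) : ℂ) else 0) *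
        (1 - lam) ^ (2 * j + 2) * lam ^ ((h : ℤ) - (j : ℤ)) *
        ∑' m : ℕ,
          c ((j - h) + m) * lam ^ ((j - h) + m) *
            ((Real.sqrt ((((j - h) + m + 2 * h + 1).factorial : ℝ) * (((j - h) + m).factorial : ℝ)) : ℝ) : ℂ) /
            ((((j - h) + m + h - j).factorial : ℕ) : ℂ) := by
  obtain rfl : F = kernelSeries lam c (2 * h + 1) := funext hF
  have hseries := hasSum_kernelSeriesCoeff hlam1 hc (2 * h + 1)
  refine ⟨summable_norm_mul_pow_mul_sqrt_div_factorial hlam1 hc (j - h) (2 * h + 1)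
    fun m => by omega,
    (hasFPowerSeriesOnBall_mkPiRing_of_forall_hasSum hseries).analyticAt.contDiffAt, ?_⟩
  rw [iteratedDeriv_zero_eq_factorial_smul_of_forall_hasSum hseries, nsmul_eq_mul]
  split_ifs with hhj
  · have hcoeff : kernelSeriesCoeff lam c (2 * h + 1) (2 * j + 1) =
        ∑' s, kernelCoeff lam c (2 * h + 1) (j - h) s := by
      rw [← kernelSeriesCoeff_add_two_mul]
      congr 1
      omega
    rw [hcoeff, ← tsum_mul_left, ← tsum_mul_left]
    exact tsum_congr (factorial_mul_kernelCoeff (norm_pos_iff.mp hlam0) c hhj)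
  · rw [kernelSeriesCoeff_eq_zero (by omega)]
    simp
end

section
/- Let λ ∈ ℂ with λ ≠ 0 and λ ≠ 1, let z ∈ ℂ with z ≠ 0, and let β ∈ ℂ with |β| < |(λ^{−1} − 1)·z|. For m, n ∈ ℕ define L_n^{(m−n)}(x) := ∑_{u=0}^n ((−1)^u/u!)·C(m, n−u)·x^u, where C(m, j) is the binomial coefficient (equal to 0 when j > m). Then for each m ∈ ℕ the series over n below converges absolutely, the resulting series over m converges, and (1−λ)·exp((λ−1)·|β−z|²) = (1−λ)·e^{−|β|² + (λ−1)·|z|²}·∑_{m=0}^∞ ∑_{n=0}^∞ (β^m·(conj β)^n/m!)·((1−λ)·conj(z))^{m−n}·λ^n·L_n^{(m−n)}(−(1−λ)²·|z|²/λ), where ((1−λ)·conj(z))^{m−n} denotes the integer power in ℂ (well defined since (1−λ)·conj(z) ≠ 0). -/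
/-!
Substituting `k = n - u` in the Laguerre sum, the factors `λ^{-u}` coming from its argument cancel
against `λ^n`, and the `n`-th term of the inner series becomes the Cauchy product of the finite
binomial row `k ↦ (β^m/m!) C(m,k) (λ conj β)^k ((1-λ) conj z)^{m-k}` with the exponential series of
`conj β (1-λ) z`. Hence the inner series sums to
`(β (λ conj β + (1-λ) conj z))^m / m! · exp (conj β (1-λ) z)`, the outer one to the exponential of
`λ|β|² + (1-λ)(β conj z + conj β z) = |β|² - (λ-1)|z|² + (λ-1)|β-z|²`.
-/

open Filter

/-- The associated Laguerre polynomial `L_n^{(m−n)}(x) = ∑_{u=0}^n ((−1)^u/u!) C(m, n−u) x^u`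
(with `C(m, j) = 0` for `j > m`). -/
noncomputable def Lag (m n : ℕ) (x : ℂ) : ℂ :=
  ∑ u ∈ Finset.range (n + 1), ((-1 : ℂ) ^ u / (u.factorial : ℂ)) * ((m.choose (n - u) : ℕ) : ℂ) * x ^ u

/-- The general term of the Cahill–Glauber double series. -/
noncomputable def cgTerm (lam z β : ℂ) (m n : ℕ) : ℂ :=
  (β ^ m * (starRingEnd ℂ) β ^ n / (m.factorial : ℂ)) *
    ((1 - lam) * (starRingEnd ℂ) z) ^ ((m : ℤ) - (n : ℤ)) * lam ^ n *
    Lag m n (-(1 - lam) ^ 2 * ((‖z‖ : ℝ) : ℂ) ^ 2 / lam)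

open Finset Nat ComplexConjugate

namespace CahillGlauber

theorem pow_mul_zpow_mul_Lag {lam w : ℂ} (h0 : lam ≠ 0) (hw : w ≠ 0) (v : ℂ) (m n : ℕ) :
    lam ^ n * w ^ ((m : ℤ) - n) * Lag m n (-(w * v) / lam) =
      ∑ k ∈ range (n + 1),
        (m.choose k : ℂ) * lam ^ k * w ^ ((m : ℤ) - k) * (v ^ (n - k) / (n - k)!) := by
  rw [Lag, mul_sum]
  conv_rhs => rw [← sum_range_reflect]
  refine sum_congr rfl fun u hu => ?_
  obtain ⟨k, rfl⟩ := Nat.exists_eq_add_of_le' (mem_range_succ_iff.mp hu)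
  have hsign : ((-1 : ℂ) ^ u) ^ 2 = 1 := by rw [← pow_mul, pow_mul', neg_one_sq, one_pow]
  rw [show k + u + 1 - 1 - u = k by omega, Nat.add_sub_cancel, Nat.add_sub_cancel_left, pow_add,
    show ((m : ℤ) - (k + u : ℕ)) = (m - k : ℤ) + -(u : ℤ) by push_cast; ring,
    zpow_add₀ hw, zpow_neg, zpow_natCast, div_pow, neg_pow (w * v), mul_pow]
  field_simp
  rw [hsign, one_mul]

theorem summable_norm_choose_mul_pow_mul_zpow (a w : ℂ) (m : ℕ) :
    Summable fun k => ‖(m.choose k : ℂ) * a ^ k * w ^ ((m : ℤ) - k)‖ :=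
  summable_of_ne_finset_zero (s := range (m + 1)) fun k hk => by
    simp [Nat.choose_eq_zero_of_lt (by simpa using hk : m < k)]

theorem tsum_choose_mul_pow_mul_zpow (a w : ℂ) (m : ℕ) :
    ∑' k, (m.choose k : ℂ) * a ^ k * w ^ ((m : ℤ) - k) = (a + w) ^ m := by
  rw [tsum_eq_sum (s := range (m + 1)) fun k hk => by
    simp [Nat.choose_eq_zero_of_lt (by simpa using hk : m < k)], add_pow]
  refine sum_congr rfl fun k hk => ?_
  rw [← Nat.cast_sub (mem_range_succ_iff.mp hk), zpow_natCast]
  ring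

theorem summable_norm_sum_range_mul_pow_div_factorial {a : ℕ → ℂ} (ha : Summable (‖a ·‖))
    (x : ℂ) : Summable fun n => ‖∑ k ∈ range (n + 1), a k * (x ^ (n - k) / (n - k)!)‖ :=
  summable_norm_sum_mul_range_of_summable_norm (g := fun j => x ^ j / (j ! : ℂ)) ha
    (NormedSpace.norm_expSeries_div_summable x)

theorem hasSum_sum_range_mul_pow_div_factorial {a : ℕ → ℂ} (ha : Summable (‖a ·‖)) (x : ℂ) :
    HasSum (fun n => ∑ k ∈ range (n + 1), a k * (x ^ (n - k) / (n - k)!))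
      ((∑' k, a k) * Complex.exp x) := by
  rw [Complex.exp_eq_exp_ℂ, NormedSpace.exp_eq_tsum_div]
  exact hasSum_sum_range_mul_of_summable_norm (g := fun j => x ^ j / (j ! : ℂ)) ha
    (NormedSpace.norm_expSeries_div_summable x)

noncomputable def cgCoeff (lam z β : ℂ) (m k : ℕ) : ℂ :=
  β ^ m / m ! * ((m.choose k : ℂ) * (lam * conj β) ^ k * ((1 - lam) * conj z) ^ ((m : ℤ) - k))

theorem summable_norm_cgCoeff (lam z β : ℂ) (m : ℕ) : Summable fun k => ‖cgCoeff lam z β m k‖ := by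
  simpa only [cgCoeff, norm_mul] using
    (summable_norm_choose_mul_pow_mul_zpow (lam * conj β) ((1 - lam) * conj z) m).mul_left
      ‖β ^ m / (m ! : ℂ)‖

theorem tsum_cgCoeff (lam z β : ℂ) (m : ℕ) :
    ∑' k, cgCoeff lam z β m k = (β * (lam * conj β + (1 - lam) * conj z)) ^ m / m ! := by
  simp only [cgCoeff]
  rw [tsum_mul_left, tsum_choose_mul_pow_mul_zpow, mul_pow]
  ring

variable {lam z : ℂ} (β : ℂ)

theorem cgTerm_eq_sum_range (h0 : lam ≠ 0) (h1 : lam ≠ 1) (hz : z ≠ 0) (m n : ℕ) :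
    cgTerm lam z β m n = ∑ k ∈ range (n + 1),
      cgCoeff lam z β m k * ((conj β * ((1 - lam) * z)) ^ (n - k) / (n - k)!) := by
  have hw : (1 - lam) * conj z ≠ 0 := mul_ne_zero (sub_ne_zero.mpr h1.symm) (by simpa using hz)
  have hx : -(1 - lam) ^ 2 * ((‖z‖ : ℝ) : ℂ) ^ 2 / lam =
      -((1 - lam) * conj z * ((1 - lam) * z)) / lam := by
    rw [← Complex.conj_mul']
    ring
  calc cgTerm lam z β m n
      = β ^ m * conj β ^ n / m ! *
          (lam ^ n * ((1 - lam) * conj z) ^ ((m : ℤ) - n) *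
            Lag m n (-((1 - lam) * conj z * ((1 - lam) * z)) / lam)) := by
        rw [cgTerm, hx]
        ring
    _ = _ := by
        rw [pow_mul_zpow_mul_Lag h0 hw, mul_sum]
        refine sum_congr rfl fun k hk => ?_
        rw [cgCoeff, mul_pow (conj β), ← pow_mul_pow_sub (conj β) (mem_range_succ_iff.mp hk)]
        ring

theorem summable_norm_cgTerm (h0 : lam ≠ 0) (h1 : lam ≠ 1) (hz : z ≠ 0) (m : ℕ) :
    Summable fun n => ‖cgTerm lam z β m n‖ := by
  simpa only [cgTerm_eq_sum_range β h0 h1 hz m] using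
    summable_norm_sum_range_mul_pow_div_factorial (summable_norm_cgCoeff lam z β m)
      (conj β * ((1 - lam) * z))

theorem hasSum_cgTerm (h0 : lam ≠ 0) (h1 : lam ≠ 1) (hz : z ≠ 0) (m : ℕ) :
    HasSum (fun n => cgTerm lam z β m n)
      ((β * (lam * conj β + (1 - lam) * conj z)) ^ m / m ! *
        Complex.exp (conj β * ((1 - lam) * z))) := by
  simpa only [cgTerm_eq_sum_range β h0 h1 hz m, tsum_cgCoeff] using
    hasSum_sum_range_mul_pow_div_factorial (summable_norm_cgCoeff lam z β m)
      (conj β * ((1 - lam) * z))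

end CahillGlauber

open CahillGlauber

theorem stmt_19_general (lam : ℂ) (h0 : lam ≠ 0) (h1 : lam ≠ 1) (z : ℂ) (hz : z ≠ 0)
    (β : ℂ) :
    (∀ m : ℕ, Summable fun n : ℕ => ‖cgTerm lam z β m n‖) ∧
    ∃ S : ℂ,
      Tendsto (fun N => ∑ m ∈ Finset.range N, ∑' n : ℕ, cgTerm lam z β m n) atTop (nhds S) ∧
      (1 - lam) * Complex.exp ((lam - 1) * ((‖β - z‖ : ℝ) : ℂ) ^ 2) =
        (1 - lam) *
          Complex.exp (-((‖β‖ : ℝ) : ℂ) ^ 2 + (lam - 1) * ((‖z‖ : ℝ) : ℂ) ^ 2) *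
          S := by
  set c₁ := β * (lam * conj β + (1 - lam) * conj z)
  set c₂ := conj β * ((1 - lam) * z)
  have hsum : HasSum (fun m => ∑' n, cgTerm lam z β m n) (Complex.exp c₁ * Complex.exp c₂) := by
    simp only [(hasSum_cgTerm β h0 h1 hz _).tsum_eq]
    exact (Complex.exp_eq_exp_ℂ ▸ NormedSpace.expSeries_div_hasSum_exp c₁).mul_right _
  refine ⟨summable_norm_cgTerm β h0 h1 hz, _, hsum.tendsto_sum_nat, ?_⟩
  rw [mul_assoc, ← Complex.exp_add, ← Complex.exp_add]
  congr 2
  rw [← Complex.conj_mul', ← Complex.conj_mul', ← Complex.conj_mul', map_sub]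
  ring

/-- The Cahill–Glauber formula: for `λ ≠ 0, 1`, `z ≠ 0` and `|β| < |(λ⁻¹−1)z|`,
each series over `n` converges absolutely, the resulting series over `m` converges, and
`(1−λ) exp((λ−1)|β−z|²) = (1−λ) e^{−|β|²+(λ−1)|z|²} ∑_m ∑_n (β^m conj(β)^n/m!)
((1−λ)conj(z))^{m−n} λ^n L_n^{(m−n)}(−(1−λ)²|z|²/λ)`. -/
theorem stmt_19 (lam : ℂ) (h0 : lam ≠ 0) (h1 : lam ≠ 1) (z : ℂ) (hz : z ≠ 0)
    (β : ℂ) (hβ : ‖β‖ < ‖(lam⁻¹ - 1) * z‖) :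
    (∀ m : ℕ, Summable fun n : ℕ => ‖cgTerm lam z β m n‖) ∧
    ∃ S : ℂ,
      Tendsto (fun N => ∑ m ∈ Finset.range N, ∑' n : ℕ, cgTerm lam z β m n) atTop (nhds S) ∧
      (1 - lam) * Complex.exp ((lam - 1) * ((‖β - z‖ : ℝ) : ℂ) ^ 2) =
        (1 - lam) *
          Complex.exp (-((‖β‖ : ℝ) : ℂ) ^ 2 + (lam - 1) * ((‖z‖ : ℝ) : ℂ) ^ 2) *
          S :=
  stmt_19_general lam h0 h1 z hz β
end
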